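/- arXiv:2506.12420 — 7 statements merged into one kernel-verified Lean document; each statement's English description precedes it below -/
import Mathlib

section
/- Let G = (L ∪ R, E) be a bipartite graph with |E| ≥ 2·√|L|·|R| and |L| ≥ 2. Then for uniformly random distinct ℓ, ℓ' ∈ L, the expected size of the common neighborhood N(ℓ) ∩ N(ℓ') is at least |R|/|L|. -/
open Finset

theorem stmt_0 {L R : Type*} [Fintype L] [Fintype R] [DecidableEq L] [DecidableEq R]
    (E : Finset (L × R)) (hL : 2 ≤ Fintype.card L)
    (hE : 2 * Real.sqrt (Fintype.card L) * (Fintype.card R) ≤ (E.card : ℝ)) :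
    (Fintype.card R : ℝ) / Fintype.card L ≤
      (∑ ℓ : L, ∑ ℓ' ∈ Finset.univ.filter (fun ℓ' => ℓ' ≠ ℓ),
        ((Finset.univ.filter (fun r => (ℓ, r) ∈ E) ∩
          Finset.univ.filter (fun r => (ℓ', r) ∈ E)).card : ℝ)) /
      ((Fintype.card L : ℝ) * ((Fintype.card L : ℝ) - 1)) := by
  classical
  set n : ℝ := (Fintype.card L : ℝ) with hn
  set m : ℝ := (Fintype.card R : ℝ) with hm
  have hn2 : (2 : ℝ) ≤ n := by rw [hn]; exact_mod_cast hL
  have hm0 : (0 : ℝ) ≤ m := by positivity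
  set f : L → R → ℝ := fun ℓ r => if (ℓ, r) ∈ E then 1 else 0 with hf
  set d : R → ℝ := fun r => ∑ ℓ : L, f ℓ r with hd
  -- card of intersection as a sum of products of indicators
  have hcard : ∀ ℓ ℓ' : L,
      ((Finset.univ.filter (fun r => (ℓ, r) ∈ E) ∩
        Finset.univ.filter (fun r => (ℓ', r) ∈ E)).card : ℝ)
      = ∑ r : R, f ℓ r * f ℓ' r := by
    intro ℓ ℓ'
    rw [← Finset.filter_and, Finset.card_filter]
    push_cast
    refine Finset.sum_congr rfl fun r _ => ?_
    by_cases h1 : (ℓ, r) ∈ E <;> by_cases h2 : (ℓ', r) ∈ E <;> simp [hf, h1, h2]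
  have hfilter : ∀ ℓ : L, Finset.univ.filter (fun ℓ' => ℓ' ≠ ℓ) = Finset.univ.erase ℓ := by
    intro ℓ; ext x; simp [Finset.mem_erase]
  -- the double sum equals ∑ r, d r ^ 2 - d r
  have hS : (∑ ℓ : L, ∑ ℓ' ∈ Finset.univ.filter (fun ℓ' => ℓ' ≠ ℓ),
        ((Finset.univ.filter (fun r => (ℓ, r) ∈ E) ∩
          Finset.univ.filter (fun r => (ℓ', r) ∈ E)).card : ℝ))
      = ∑ r : R, (d r ^ 2 - d r) := by
    have h1 : ∀ ℓ : L, (∑ ℓ' ∈ Finset.univ.filter (fun ℓ' => ℓ' ≠ ℓ),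
        ((Finset.univ.filter (fun r => (ℓ, r) ∈ E) ∩
          Finset.univ.filter (fun r => (ℓ', r) ∈ E)).card : ℝ))
        = (∑ ℓ' : L, ∑ r : R, f ℓ r * f ℓ' r) - ∑ r : R, f ℓ r := by
      intro ℓ
      rw [hfilter ℓ, Finset.sum_erase_eq_sub (Finset.mem_univ ℓ)]
      simp only [hcard]
      congr 1
      refine Finset.sum_congr rfl fun r _ => ?_
      by_cases h1 : (ℓ, r) ∈ E <;> simp [hf, h1]
    simp only [h1, Finset.sum_sub_distrib]
    congr 1
    · calc (∑ ℓ : L, ∑ ℓ' : L, ∑ r : R, f ℓ r * f ℓ' r)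
          = ∑ ℓ : L, ∑ r : R, f ℓ r * d r := by
            refine Finset.sum_congr rfl fun ℓ _ => ?_
            rw [Finset.sum_comm]
            exact Finset.sum_congr rfl fun r _ => by simp only [hd, Finset.mul_sum]
        _ = ∑ r : R, d r * d r := by
            rw [Finset.sum_comm]
            refine Finset.sum_congr rfl fun r _ => ?_
            simp only [hd]
            rw [← Finset.sum_mul]
        _ = ∑ r : R, d r ^ 2 := by simp [sq]
    · exact Finset.sum_comm
  -- |E| = ∑ r, d r
  have he : (E.card : ℝ) = ∑ r : R, d r := by
    have h0 : (E.card : ℝ) = ∑ p : L × R, if p ∈ E then (1 : ℝ) else 0 := by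
      rw [Finset.sum_ite_mem, Finset.univ_inter, Finset.sum_const]; simp
    rw [h0, Fintype.sum_prod_type, Finset.sum_comm]
  -- d r ≤ n
  have hdle : ∀ r : R, d r ≤ n := by
    intro r
    have : d r ≤ ∑ ℓ : L, (1 : ℝ) := by
      refine Finset.sum_le_sum fun ℓ _ => ?_
      by_cases h : (ℓ, r) ∈ E <;> simp [hf, h]
    simpa [hn] using this
  have h4 : (E.card : ℝ) ≤ n * m := by
    rw [he]
    calc ∑ r : R, d r ≤ ∑ r : R, n := Finset.sum_le_sum fun r _ => hdle r
      _ = n * m := by simp [hm, mul_comm]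
  set Q : ℝ := ∑ r : R, d r ^ 2 with hQdef
  -- Cauchy-Schwarz
  have hQ : (E.card : ℝ) ^ 2 ≤ m * Q := by
    have := sq_sum_le_card_mul_sum_sq (s := (Finset.univ : Finset R)) (f := d)
    rw [he]
    simpa [hm, Finset.card_univ] using this
  -- key inequality
  have key : m * (n - 1) ≤ ∑ r : R, (d r ^ 2 - d r) := by
    rcases eq_or_lt_of_le hm0 with hmz | hmpos
    · have hc : Fintype.card R = 0 := by
        have h := hmz.symm; rw [hm] at h; exact_mod_cast h
      have hRempty : (Finset.univ : Finset R) = ∅ :=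
        Finset.card_eq_zero.mp (by rw [Finset.card_univ]; exact hc)
      rw [hRempty, Finset.sum_empty, ← hmz]
      nlinarith [hn2]
    · have hm1' : 0 < m := hmpos
      have hsq : Real.sqrt n ^ 2 = n := Real.sq_sqrt (by linarith)
      have h1 : 4 * n * m ^ 2 ≤ (E.card : ℝ) ^ 2 := by
        nlinarith [hE, hsq, Real.sqrt_nonneg n,
          mul_nonneg (mul_nonneg (by norm_num : (0:ℝ) ≤ 2) (Real.sqrt_nonneg n)) hm0]
      have h2 : 4 * n * m ^ 2 ≤ m * Q := le_trans h1 hQ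
      have h3 : 4 * n * m ≤ Q := le_of_mul_le_mul_left (by nlinarith [h2]) hm1'
      rw [Finset.sum_sub_distrib, ← hQdef, ← he]
      nlinarith [h3, h4, mul_nonneg (by linarith : (0:ℝ) ≤ n) hm0]
  rw [hS, div_le_div_iff₀ (by linarith) (by nlinarith)]
  nlinarith [mul_le_mul_of_nonneg_right key (by linarith : (0:ℝ) ≤ n)]
end

section
/- Let n be a positive integer and let L = {0,1}^n. If a bipartite graph G = (L ∪ R, E) satisfies |E| ≥ 2^n·|R|·2^{−δn} for some δ < 0.1 with n sufficiently large, then there exist ℓ, ℓ' ∈ {0,1}^n with Hamming distance d_H(ℓ, ℓ') ≥ 0.1n such that |N(ℓ) ∩ N(ℓ')| ≥ |R|·2^{−2δn−2}. -/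
/-!
Double counting: if `d r` is the degree of `r ∈ R`, then summing `|N ℓ ∩ N ℓ'|` over all `4ⁿ`
ordered pairs gives `∑ d r ^ 2 ≥ |E|² / |R| ≥ 4ⁿ |R| 2^(-2δn)` by Cauchy–Schwarz. Weighting each
pair by `2^(-d_H)` shows that at most `2^(0.1n) 3ⁿ ≤ 2^(1.7n)` pairs are at distance `≤ 0.1n`
(using `3 < 2^1.6`); each contributes at most `|R|`, which for `δ < 0.1` and large `n` is at most
a quarter of the sum. So the at most `4ⁿ` far pairs carry the rest, and one of them has codegree
at least `|R| 2^(-2δn-2)`.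
-/

open Finset

section Hamming

variable {ι : Type*} [Fintype ι] [DecidableEq ι]

theorem sum_pow_hammingDist {S : Type*} [CommSemiring S] (x : S) (f : ι → Bool) :
    ∑ g : ι → Bool, x ^ hammingDist f g = (1 + x) ^ Fintype.card ι := by
  have hterm : ∀ g : ι → Bool, x ^ hammingDist f g = ∏ i, if f i ≠ g i then x else 1 := by
    intro g
    rw [← prod_filter, prod_const]
    rfl
  have hfactor : ∀ i, ∑ b : Bool, (if f i ≠ b then x else 1) = 1 + x := by
    intro i
    cases f i <;> simp [add_comm]
  simp_rw [hterm]
  rw [← Fintype.prod_sum fun i b => if f i ≠ b then x else 1]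
  simp only [hfactor, prod_const, card_univ]

theorem card_filter_hammingDist_le (t : ℝ) :
    (#{p : (ι → Bool) × (ι → Bool) | (hammingDist p.1 p.2 : ℝ) ≤ t} : ℝ) ≤
      2 ^ t * 3 ^ Fintype.card ι := by
  have hweight : ∀ p : (ι → Bool) × (ι → Bool), (hammingDist p.1 p.2 : ℝ) ≤ t →
      1 ≤ 2 ^ t * (1 / 2 : ℝ) ^ hammingDist p.1 p.2 := by
    intro p hp
    rw [one_div, inv_pow, ← div_eq_mul_inv, one_le_div (by positivity), ← Real.rpow_natCast]
    exact Real.rpow_le_rpow_of_exponent_le one_le_two hp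
  calc (#{p : (ι → Bool) × (ι → Bool) | (hammingDist p.1 p.2 : ℝ) ≤ t} : ℝ)
      ≤ ∑ p : (ι → Bool) × (ι → Bool), 2 ^ t * (1 / 2 : ℝ) ^ hammingDist p.1 p.2 := by
        rw [card_filter]
        push_cast
        gcongr with p
        split_ifs with hp
        · exact hweight p hp
        · positivity
    _ = 2 ^ t * 3 ^ Fintype.card ι := by
        rw [← mul_sum, Fintype.sum_prod_type]
        simp_rw [sum_pow_hammingDist, sum_const, card_univ, Fintype.card_fun, Fintype.card_bool]
        norm_num [← mul_pow]

end Hamming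

section Codegree

variable {L R : Type*} [Fintype L] [Fintype R] [DecidableEq L] [DecidableEq R]

def neighborFinset (E : Finset (L × R)) (ℓ : L) : Finset R := {r | (ℓ, r) ∈ E}

def codegree (E : Finset (L × R)) (ℓ ℓ' : L) : ℕ := #(neighborFinset E ℓ ∩ neighborFinset E ℓ')

theorem card_eq_sum_card_filter_mem (E : Finset (L × R)) :
    #E = ∑ r, #{ℓ | (ℓ, r) ∈ E} := by
  simp_rw [card_filter]
  rw [← Fintype.sum_prod_type_right (fun x => if x ∈ E then 1 else 0), ← card_filter,
    filter_mem_eq_inter, univ_inter]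

theorem sum_codegree_eq_sum_sq (E : Finset (L × R)) :
    ∑ p : L × L, codegree E p.1 p.2 = ∑ r, #{ℓ | (ℓ, r) ∈ E} ^ 2 := by
  have := sum_card_bipartiteAbove_eq_sum_card_bipartiteBelow (s := (univ : Finset (L × L)))
    (t := (univ : Finset R)) (r := fun p r => (p.1, r) ∈ E ∧ (p.2, r) ∈ E)
  simp only [bipartiteAbove, bipartiteBelow] at this
  convert this using 2 with p _ r
  · simp [codegree, neighborFinset, filter_and]
  · rw [sq, ← card_product, ← filter_product, univ_product_univ]

theorem sq_card_le_card_mul_sum_codegree (E : Finset (L × R)) :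
    #E ^ 2 ≤ Fintype.card R * ∑ p : L × L, codegree E p.1 p.2 := by
  rw [sum_codegree_eq_sum_sq, card_eq_sum_card_filter_mem]
  exact sq_sum_le_card_mul_sum_sq

theorem exists_codegree_ge (E : Finset (L × R)) (close : L × L → Prop) [DecidablePred close]
    {T : ℝ} (hT : 0 ≤ T)
    (h : Fintype.card R * (Fintype.card L ^ 2 * T + #{p | close p} * Fintype.card R) < #E ^ 2) :
    ∃ p, ¬ close p ∧ T ≤ codegree E p.1 p.2 := by
  by_contra! hsmall
  have hfar : ∑ p with ¬ close p, (codegree E p.1 p.2 : ℝ) ≤ Fintype.card L ^ 2 * T :=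
    calc ∑ p with ¬ close p, (codegree E p.1 p.2 : ℝ)
        ≤ #{p | ¬ close p} * T := by
          simpa using sum_le_card_nsmul _ _ T fun p hp => (hsmall p (mem_filter.1 hp).2).le
      _ ≤ Fintype.card L ^ 2 * T := by
          gcongr
          exact_mod_cast (card_filter_le _ _).trans_eq (by simp [sq])
  have hnear : ∑ p with close p, (codegree E p.1 p.2 : ℝ) ≤ #{p | close p} * Fintype.card R := by
    simpa using sum_le_card_nsmul _ _ (Fintype.card R : ℝ) fun p _ => by
      exact_mod_cast (card_le_card inter_subset_left).trans (card_le_univ _)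
  have hcs : (#E : ℝ) ^ 2 ≤ Fintype.card R * ∑ p : L × L, (codegree E p.1 p.2 : ℝ) := by
    exact_mod_cast sq_card_le_card_mul_sum_codegree E
  rw [← sum_filter_add_sum_filter_not univ close] at hcs
  have := mul_le_mul_of_nonneg_left (add_le_add hnear hfar) (Nat.cast_nonneg (Fintype.card R))
  linarith

end Codegree

theorem three_pow_le_two_rpow (n : ℕ) : (3 : ℝ) ^ n ≤ 2 ^ (1.6 * n : ℝ) := by
  have h3 : (3 : ℝ) ≤ 2 ^ (1.6 : ℝ) := by
    rw [← pow_le_pow_iff_left₀ (by norm_num) (by positivity) (by norm_num : 5 ≠ 0),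
      ← Real.rpow_natCast (2 ^ (1.6 : ℝ)) 5, ← Real.rpow_mul zero_le_two]
    norm_num
  calc (3 : ℝ) ^ n ≤ (2 ^ (1.6 : ℝ)) ^ n := pow_le_pow_left₀ (by norm_num) h3 n
    _ = 2 ^ (1.6 * n : ℝ) := by rw [← Real.rpow_natCast, ← Real.rpow_mul (by norm_num)]

theorem two_rpow_mul_three_pow_add_lt {n : ℕ} (hn : 20 ≤ n) {δ : ℝ} (hδ : δ < 0.1) :
    (2 : ℝ) ^ (0.1 * n : ℝ) * 3 ^ n + (2 ^ n) ^ 2 * 2 ^ (-(2 * δ * n) - 2) <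
      (2 ^ n * 2 ^ (-(δ * n))) ^ 2 := by
  have hn' : (20 : ℝ) ≤ n := by exact_mod_cast hn
  set w : ℝ := 2 ^ (-(2 * δ * n) - 2)
  have hpow : ((2 : ℝ) ^ n) ^ 2 = 2 ^ (2 * n : ℝ) := by
    rw [← pow_mul, ← Real.rpow_natCast]
    push_cast
    ring_nf
  have hsq : ((2 : ℝ) ^ (-(δ * n))) ^ 2 = 4 * w := by
    rw [← Real.rpow_natCast, ← Real.rpow_mul zero_le_two,
      show -(δ * n) * ((2 : ℕ) : ℝ) = (-(2 * δ * n) - 2) + 2 by push_cast; ring,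
      Real.rpow_add two_pos]
    norm_num
    ring
  have hnear : (2 : ℝ) ^ (0.1 * n : ℝ) * 3 ^ n ≤ (2 ^ n) ^ 2 * w :=
    calc (2 : ℝ) ^ (0.1 * n : ℝ) * 3 ^ n ≤ 2 ^ (0.1 * n : ℝ) * 2 ^ (1.6 * n : ℝ) := by
          gcongr
          exact three_pow_le_two_rpow n
      _ = 2 ^ (1.7 * n : ℝ) := by rw [← Real.rpow_add two_pos]; ring_nf
      _ ≤ (2 ^ n) ^ 2 * w := by
          rw [hpow, ← Real.rpow_add two_pos]
          apply Real.rpow_le_rpow_of_exponent_le one_le_two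
          nlinarith
  have hw : 0 < (2 ^ n) ^ 2 * w := by positivity
  rw [mul_pow, hsq]
  linarith

theorem stmt_2 : ∃ N : ℕ, ∀ n : ℕ, N ≤ n → ∀ (δ : ℝ), δ < 0.1 →
    ∀ {R : Type} [Fintype R] [DecidableEq R] (E : Finset ((Fin n → Bool) × R)),
    (2:ℝ)^n * (Fintype.card R) * (2:ℝ) ^ (-(δ * n)) ≤ (E.card : ℝ) →
    ∃ ℓ ℓ' : Fin n → Bool, 0.1 * (n:ℝ) ≤ (hammingDist ℓ ℓ' : ℝ) ∧
      (Fintype.card R : ℝ) * (2:ℝ) ^ (-(2*δ*(n:ℝ)) - 2) ≤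
        ((Finset.univ.filter (fun r => (ℓ, r) ∈ E) ∩
          Finset.univ.filter (fun r => (ℓ', r) ∈ E)).card : ℝ) := by
  refine ⟨20, fun n hn δ hδ R _ _ E hE => ?_⟩
  rcases (Fintype.card R).eq_zero_or_pos with hR | hR
  · refine ⟨fun _ => false, fun _ => true, ?_, by simp [hR]⟩
    have : (20 : ℝ) ≤ n := by exact_mod_cast hn
    simp [hammingDist]
    linarith
  suffices h : ∃ p : (Fin n → Bool) × (Fin n → Bool), ¬ (hammingDist p.1 p.2 : ℝ) ≤ 0.1 * n ∧
      (Fintype.card R : ℝ) * 2 ^ (-(2 * δ * n) - 2) ≤ codegree E p.1 p.2 by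
    obtain ⟨⟨ℓ, ℓ'⟩, hfar, hcodeg⟩ := h
    exact ⟨ℓ, ℓ', (not_le.mp hfar).le, hcodeg⟩
  refine exists_codegree_ge E _ (by positivity) ?_
  have hnear := card_filter_hammingDist_le (ι := Fin n) (0.1 * n)
  have hnum := two_rpow_mul_three_pow_add_lt hn hδ
  simp only [Fintype.card_fun, Fintype.card_bool, Fintype.card_fin] at hnear ⊢
  push_cast
  have hR' : (0 : ℝ) < Fintype.card R := by exact_mod_cast hR
  have hcard : ((2 : ℝ) ^ n * Fintype.card R * 2 ^ (-(δ * n))) ^ 2 ≤ (#E : ℝ) ^ 2 := by gcongr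
  have hsum := mul_lt_mul_of_pos_left (add_lt_add_of_le_of_lt hnear hnum) (pow_pos hR' 2)
  linarith
end

section
/- Let q be a prime, k ≥ 2, r ≥ 2^{k+1}, and let χ_α be a nontrivial additive character of F_q. For any functions f_1,…,f_k where f_i: (F_q^r)^k → {0,1} does not depend on the i-th argument, the quantity γ := |E_{(x_1,…,x_k)}[∏_i f_i(x_1,…,x_k) · χ_α(GIP(x_1,…,x_k))]| satisfies γ^{2^{k−1}} ≤ (2k/q)^r. -/
open Finset

/-- The generalized inner product over `F_q`. -/
def GIP {q r k : ℕ} (x : Fin k → Fin r → ZMod q) : ZMod q := ∑ j, ∏ i, x i j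

/-!
Split off the first variable `a` of the correlation. The factor `f 0` does not depend on `a`, so
Cauchy–Schwarz in the remaining variables removes it and replaces `a` by a pair `(a, a')`; the
character then carries the weights `w * (a - a')`, and the other factors form a cylinder family in
one variable fewer. After `k - 1` steps a single variable is left, and averaging the character over
it yields the indicator that every weight `w j * ∏ i, (a i j - a' i j)` vanishes. The coordinates
`j` are independent, and a product of `k - 1` differences of uniform elements of `F_q` vanishes with
probability at most `(k - 1) / q`, whence the bound `((k - 1) / q) ^ r ≤ (2k / q) ^ r`.
-/

open scoped BigOperators ComplexConjugate

section Expect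

variable {ι : Type*} [Fintype ι]

lemma pow_expect_le_expect_pow [Nonempty ι] {f : ι → ℝ} (hf : ∀ i, 0 ≤ f i) (n : ℕ) :
    (𝔼 i, f i) ^ n ≤ 𝔼 i, f i ^ n := by
  cases n with
  | zero => simp
  | succ n =>
    have h := pow_sum_div_card_le_sum_pow (s := univ) (fun i _ => hf i) n
    rw [card_univ] at h
    simp only [Fintype.expect_eq_sum_div_card, div_pow]
    calc (∑ i, f i) ^ (n + 1) / (Fintype.card ι : ℝ) ^ (n + 1)
        = (∑ i, f i) ^ (n + 1) / (Fintype.card ι : ℝ) ^ n / Fintype.card ι := by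
          rw [div_div, ← pow_succ]
      _ ≤ (∑ i, f i ^ (n + 1)) / Fintype.card ι := by gcongr

lemma expect_pi_prod [DecidableEq ι] {A K : Type*} [Fintype A] [RCLike K]
    (g : ι → A → K) : 𝔼 x : ι → A, ∏ i, g i (x i) = ∏ i, 𝔼 a, g i a := by
  simp only [Fintype.expect_eq_sum_div_card, Fintype.card_pi, Fintype.prod_sum, prod_div_distrib,
    prod_const, card_univ, Nat.cast_pow]

lemma expect_fin_cons {n : ℕ} {α M : Type*} [Fintype α] [AddCommMonoid M] [Module ℚ≥0 M]
    (F : (Fin (n + 1) → α) → M) : 𝔼 x, F x = 𝔼 a, 𝔼 y, F (Fin.cons a y) := by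
  rw [← expect_product', univ_product_univ]
  exact Fintype.expect_equiv (Fin.consEquiv fun _ => α).symm _ _ fun x => by simp

end Expect

/-- Cauchy–Schwarz in the variable `y`, which removes the weight `h` and doubles `a`. -/
lemma norm_expect_expect_sq_le {V W : Type*} [Fintype V] [Fintype W] [Nonempty W]
    {h : W → ℂ} (hh : ∀ y, ‖h y‖ ≤ 1) (g : V → W → ℂ) :
    ‖𝔼 a, 𝔼 y, h y * g a y‖ ^ 2 ≤ 𝔼 a, 𝔼 a', ‖𝔼 y, g a y * conj (g a' y)‖ := by
  have hsq : ∀ y, ((‖𝔼 a, g a y‖ ^ 2 : ℝ) : ℂ) = 𝔼 a, 𝔼 a', g a y * conj (g a' y) := by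
    intro y
    rw [← expect_mul_expect, ← map_expect, Complex.mul_conj, Complex.sq_norm]
  calc ‖𝔼 a, 𝔼 y, h y * g a y‖ ^ 2
      = ‖𝔼 y, h y * 𝔼 a, g a y‖ ^ 2 := by
        rw [expect_comm]
        simp_rw [mul_expect]
    _ ≤ (𝔼 y, ‖𝔼 a, g a y‖) ^ 2 := by
        refine pow_le_pow_left₀ (norm_nonneg _) ?_ 2
        refine (RCLike.norm_expect_le (K := ℂ)).trans (expect_le_expect fun y _ => ?_)
        rw [norm_mul]
        exact mul_le_of_le_one_left (norm_nonneg _) (hh y)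
    _ ≤ 𝔼 y, ‖𝔼 a, g a y‖ ^ 2 := pow_expect_le_expect_pow (fun _ => norm_nonneg _) 2
    _ = ‖𝔼 y, 𝔼 a, 𝔼 a', g a y * conj (g a' y)‖ := by
        rw [← Complex.norm_of_nonneg (expect_nonneg fun y _ => sq_nonneg _), Complex.ofReal_expect]
        simp_rw [hsq]
    _ = ‖𝔼 a, 𝔼 a', 𝔼 y, g a y * conj (g a' y)‖ := by
        rw [expect_comm]
        simp_rw [expect_comm (s := univ (α := W))]
    _ ≤ 𝔼 a, 𝔼 a', ‖𝔼 y, g a y * conj (g a' y)‖ :=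
        (RCLike.norm_expect_le (K := ℂ)).trans
          (expect_le_expect fun a _ => RCLike.norm_expect_le (K := ℂ))

lemma norm_expect_expect_pow_le {V W : Type*} [Fintype V] [Fintype W] [Nonempty V] [Nonempty W]
    {h : W → ℂ} (hh : ∀ y, ‖h y‖ ≤ 1) (g : V → W → ℂ) (N : ℕ) :
    ‖𝔼 a, 𝔼 y, h y * g a y‖ ^ (2 * N) ≤ 𝔼 a, 𝔼 a', ‖𝔼 y, g a y * conj (g a' y)‖ ^ N :=
  calc ‖𝔼 a, 𝔼 y, h y * g a y‖ ^ (2 * N)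
      ≤ (𝔼 a, 𝔼 a', ‖𝔼 y, g a y * conj (g a' y)‖) ^ N := by
        rw [pow_mul]
        exact pow_le_pow_left₀ (sq_nonneg _) (norm_expect_expect_sq_le hh g) N
    _ ≤ 𝔼 a, (𝔼 a', ‖𝔼 y, g a y * conj (g a' y)‖) ^ N :=
        pow_expect_le_expect_pow (fun _ => expect_nonneg fun _ _ => norm_nonneg _) N
    _ ≤ 𝔼 a, 𝔼 a', ‖𝔼 y, g a y * conj (g a' y)‖ ^ N :=
        expect_le_expect fun _ _ => pow_expect_le_expect_pow (fun _ => norm_nonneg _) N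

lemma AddChar.map_sum_eq_prod {A M ι : Type*} [AddCommMonoid A] [CommMonoid M] (ψ : AddChar A M)
    (s : Finset ι) (g : ι → A) : ψ (∑ i ∈ s, g i) = ∏ i ∈ s, ψ (g i) := by
  induction s using Finset.cons_induction with
  | empty => simp
  | cons a s ha ih => rw [sum_cons, prod_cons, AddChar.map_add_eq_mul, ih]

section FiniteField

variable {F : Type*} [Field F] [Fintype F] [DecidableEq F]

lemma expect_addChar_mul {χ : AddChar F ℂ} (hχ : χ ≠ 1) (c : F) :
    𝔼 t, χ (c * t) = if c = 0 then 1 else 0 := by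
  simp_rw [mul_comm c, Fintype.expect_eq_sum_div_card,
    AddChar.sum_mulShift c (AddChar.IsPrimitive.of_ne_one hχ)]
  split_ifs <;> simp

lemma expect_addChar_dotProduct {ι : Type*} [Fintype ι] [DecidableEq ι] {χ : AddChar F ℂ}
    (hχ : χ ≠ 1) (w : ι → F) :
    𝔼 v : ι → F, χ (∑ j, w j * v j) = ∏ j, if w j = 0 then 1 else 0 := by
  simp_rw [AddChar.map_sum_eq_prod, expect_pi_prod fun j t => χ (w j * t), expect_addChar_mul hχ]

variable (F) in
/-- `vanishProb F m c` is the probability that `c * ∏ i, (a i - a' i) = 0` for independent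
uniform `a a' : Fin m → F`. -/
noncomputable def vanishProb : ℕ → F → ℝ
  | 0, c => if c = 0 then 1 else 0
  | m + 1, c => 𝔼 p : F × F, vanishProb m (c * (p.1 - p.2))

lemma vanishProb_nonneg : ∀ m (c : F), 0 ≤ vanishProb F m c
  | 0, c => by unfold vanishProb; positivity
  | m + 1, _ => expect_nonneg fun _ _ => vanishProb_nonneg m _

lemma vanishProb_le_one : ∀ m (c : F), vanishProb F m c ≤ 1
  | 0, c => by unfold vanishProb; split_ifs <;> norm_num
  | m + 1, _ => expect_le univ_nonempty fun _ _ => vanishProb_le_one m _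

lemma vanishProb_le : ∀ m {c : F}, c ≠ 0 → vanishProb F m c ≤ m / Fintype.card F
  | 0, c, hc => by simp [vanishProb, hc]
  | m + 1, c, hc => by
    have hpoint : ∀ p : F × F,
        vanishProb F m (c * (p.1 - p.2)) ≤ (if p.1 = p.2 then 1 else 0) + m / Fintype.card F := by
      rintro ⟨a, a'⟩
      by_cases h : a = a'
      · simp only [h, if_true]
        have := vanishProb_le_one m (c * (a' - a'))
        have : (0 : ℝ) ≤ m / Fintype.card F := by positivity
        linarith
      · simpa [h] using vanishProb_le m (mul_ne_zero hc (sub_ne_zero_of_ne h))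
    calc vanishProb F (m + 1) c
        ≤ 𝔼 p : F × F, ((if p.1 = p.2 then (1 : ℝ) else 0) + m / Fintype.card F) :=
          expect_le_expect fun p _ => hpoint p
      _ = ↑(m + 1) / Fintype.card F := by
          rw [expect_add_distrib, Fintype.expect_const, ← univ_product_univ, expect_product]
          simp only [Fintype.expect_ite_eq, Fintype.expect_const]
          rw [NNRat.smul_def]
          push_cast
          ring

end FiniteField

def IsCylinderFamily {k : ℕ} {α β : Type*} (f : Fin k → (Fin k → α) → β) : Prop :=
  ∀ i x x', (∀ j, j ≠ i → x j = x' j) → f i x = f i x'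

lemma IsCylinderFamily.mul_conj {k : ℕ} {α : Type*} {f g : Fin k → (Fin k → α) → ℂ}
    (hf : IsCylinderFamily f) (hg : IsCylinderFamily g) :
    IsCylinderFamily fun i x => f i x * conj (g i x) := fun i x x' h => by
  simp only [hf i x x' h, hg i x x' h]

lemma IsCylinderFamily.succ_cons {n : ℕ} {α β : Type*} {f : Fin (n + 1) → (Fin (n + 1) → α) → β}
    (hf : IsCylinderFamily f) (a : α) :
    IsCylinderFamily fun (i : Fin n) (y : Fin n → α) => f i.succ (Fin.cons a y) :=
  fun i y y' h => hf i.succ _ _ fun j hj => by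
    cases j using Fin.cases with
    | zero => rfl
    | succ j => exact h j fun hji => hj (hji ▸ rfl)

section Correlation

variable {F : Type*} [Field F] [Fintype F] {r : ℕ} (χ : AddChar F ℂ)

noncomputable def gipTerm {k : ℕ} (f : Fin k → (Fin k → Fin r → F) → ℂ) (w : Fin r → F)
    (x : Fin k → Fin r → F) : ℂ :=
  (∏ i, f i x) * χ (∑ j, w j * ∏ i, x i j)

noncomputable def gipCorrelation {k : ℕ} (f : Fin k → (Fin k → Fin r → F) → ℂ)
    (w : Fin r → F) : ℂ :=
  𝔼 x, gipTerm χ f w x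

lemma gipCorrelation_eq_expect_expect {n : ℕ} {f : Fin (n + 1) → (Fin (n + 1) → Fin r → F) → ℂ}
    (hf : IsCylinderFamily f) (w : Fin r → F) :
    gipCorrelation χ f w = 𝔼 a, 𝔼 y, f 0 (Fin.cons 0 y) *
      gipTerm χ (fun i y => f i.succ (Fin.cons a y)) (w * a) y := by
  rw [gipCorrelation, expect_fin_cons]
  refine expect_congr rfl fun a _ => expect_congr rfl fun y _ => ?_
  have hf0 : f 0 (Fin.cons a y) = f 0 (Fin.cons 0 y) :=
    hf 0 _ _ fun j hj => by rw [← Fin.succ_pred j hj, Fin.cons_succ, Fin.cons_succ]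
  simp only [gipTerm, Fin.prod_univ_succ, Fin.cons_zero, Fin.cons_succ, hf0, Pi.mul_apply,
    mul_assoc]

lemma gipTerm_mul_conj {k : ℕ} (f f' : Fin k → (Fin k → Fin r → F) → ℂ) (w w' : Fin r → F)
    (x : Fin k → Fin r → F) :
    gipTerm χ f w x * conj (gipTerm χ f' w' x) =
      gipTerm χ (fun i x => f i x * conj (f' i x)) (w - w') x := by
  have hphase : ∑ j, (w - w') j * ∏ i, x i j =
      ∑ j, w j * ∏ i, x i j + -∑ j, w' j * ∏ i, x i j := by
    rw [← sub_eq_add_neg, ← sum_sub_distrib]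
    simp only [Pi.sub_apply, sub_mul]
  simp only [gipTerm, hphase, AddChar.map_add_eq_mul, AddChar.map_neg_eq_conj, map_mul, map_prod,
    prod_mul_distrib]
  ring

variable [DecidableEq F]

lemma norm_gipCorrelation_le_of_fin_one (hχ : χ ≠ 1) {f : Fin 1 → (Fin 1 → Fin r → F) → ℂ}
    (hf1 : ∀ i x, ‖f i x‖ ≤ 1) (hf : IsCylinderFamily f) (w : Fin r → F) :
    ‖gipCorrelation χ f w‖ ≤ ∏ j, vanishProb F 0 (w j) := by
  rw [gipCorrelation_eq_expect_expect χ hf]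
  simp only [gipTerm, univ_unique, univ_eq_empty, prod_empty, Pi.mul_apply, mul_one, one_mul,
    expect_singleton]
  rw [← mul_expect, expect_addChar_dotProduct hχ, norm_mul, norm_prod]
  have hnorm : ∀ j, ‖(if w j = 0 then 1 else 0 : ℂ)‖ = vanishProb F 0 (w j) := fun j => by
    unfold vanishProb; split_ifs <;> simp
  simp only [hnorm]
  exact mul_le_of_le_one_left (prod_nonneg fun j _ => vanishProb_nonneg 0 _) (hf1 _ _)

lemma expect_expect_prod_vanishProb (m : ℕ) (w : Fin r → F) :
    𝔼 a : Fin r → F, 𝔼 a' : Fin r → F, ∏ j, vanishProb F m (w j * (a j - a' j)) =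
      ∏ j, vanishProb F (m + 1) (w j) := by
  rw [← expect_product', univ_product_univ,
    ← Fintype.expect_equiv (Equiv.arrowProdEquivProdArrow _ (fun _ => F) fun _ => F)
      (fun z : Fin r → F × F => ∏ j, vanishProb F m (w j * ((z j).1 - (z j).2))) _ fun _ => rfl]
  exact expect_pi_prod fun j (p : F × F) => vanishProb F m (w j * (p.1 - p.2))

theorem norm_gipCorrelation_pow_le (hχ : χ ≠ 1) {m : ℕ}
    {f : Fin (m + 1) → (Fin (m + 1) → Fin r → F) → ℂ} (hf1 : ∀ i x, ‖f i x‖ ≤ 1)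
    (hf : IsCylinderFamily f) (w : Fin r → F) :
    ‖gipCorrelation χ f w‖ ^ 2 ^ m ≤ ∏ j, vanishProb F m (w j) := by
  induction m generalizing w with
  | zero => simpa using norm_gipCorrelation_le_of_fin_one χ hχ hf1 hf w
  | succ m ih =>
    calc ‖gipCorrelation χ f w‖ ^ 2 ^ (m + 1)
        ≤ 𝔼 a, 𝔼 a', ‖𝔼 y, gipTerm χ (fun i y => f i.succ (Fin.cons a y)) (w * a) y *
            conj (gipTerm χ (fun i y => f i.succ (Fin.cons a' y)) (w * a') y)‖ ^ 2 ^ m := by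
          rw [gipCorrelation_eq_expect_expect χ hf, pow_succ']
          exact norm_expect_expect_pow_le (fun y => hf1 0 _) _ _
      _ ≤ 𝔼 a : Fin r → F, 𝔼 a' : Fin r → F, ∏ j, vanishProb F m (w j * (a j - a' j)) := by
          refine expect_le_expect fun a _ => expect_le_expect fun a' _ => ?_
          simp_rw [gipTerm_mul_conj, ← mul_sub]
          refine ih (fun i y => ?_) ((hf.succ_cons a).mul_conj (hf.succ_cons a')) _
          rw [norm_mul, RCLike.norm_conj]
          exact mul_le_one₀ (hf1 _ _) (norm_nonneg _) (hf1 _ _)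
      _ = ∏ j, vanishProb F (m + 1) (w j) := expect_expect_prod_vanishProb m w

end Correlation

theorem stmt_6_general (q k r : ℕ) [Fact q.Prime] (hk : 2 ≤ k)
    (χ : AddChar (ZMod q) ℂ) (hχ : χ ≠ 1)
    (f : Fin k → (Fin k → Fin r → ZMod q) → ℝ)
    (hval : ∀ i x, f i x = 0 ∨ f i x = 1)
    (hcyl : ∀ i x x', (∀ j, j ≠ i → x j = x' j) → f i x = f i x') :
    (‖(Fintype.card (Fin k → Fin r → ZMod q) : ℂ)⁻¹ *
      ∑ x : Fin k → Fin r → ZMod q, (∏ i, (f i x : ℂ)) * χ (GIP x)‖) ^ (2^(k-1)) ≤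
      ((2*k : ℝ)/q) ^ r := by
  obtain ⟨m, rfl⟩ : ∃ m, k = m + 1 := ⟨k - 1, by omega⟩
  have hf1 : ∀ i x, ‖(f i x : ℂ)‖ ≤ 1 := fun i x => by rcases hval i x with h | h <;> simp [h]
  have hf : IsCylinderFamily fun i x => (f i x : ℂ) := fun i x x' h => by simp only [hcyl i x x' h]
  have hcorr : (Fintype.card (Fin (m + 1) → Fin r → ZMod q) : ℂ)⁻¹ *
      ∑ x : Fin (m + 1) → Fin r → ZMod q, (∏ i, (f i x : ℂ)) * χ (GIP x) =
        gipCorrelation χ (fun i x => (f i x : ℂ)) 1 := by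
    simp [gipCorrelation, gipTerm, GIP, Fintype.expect_eq_sum_div_card, div_eq_inv_mul]
  have hvanish : vanishProb (ZMod q) m 1 ≤ 2 * (m + 1 : ℕ) / q := by
    refine (vanishProb_le m one_ne_zero).trans ?_
    rw [ZMod.card]
    gcongr
    push_cast
    linarith
  rw [hcorr, Nat.add_sub_cancel]
  calc _ ≤ ∏ _j : Fin r, vanishProb (ZMod q) m 1 := norm_gipCorrelation_pow_le χ hχ hf1 hf 1
    _ ≤ _ := by
      rw [prod_const, card_univ, Fintype.card_fin]
      exact pow_le_pow_left₀ (vanishProb_nonneg m 1) hvanish r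

theorem stmt_6 (q k r : ℕ) [Fact q.Prime] [NeZero q] (hk : 2 ≤ k) (hr : 2^(k+1) ≤ r)
    (χ : AddChar (ZMod q) ℂ) (hχ : χ ≠ 1)
    (f : Fin k → (Fin k → Fin r → ZMod q) → ℝ)
    (hval : ∀ i x, f i x = 0 ∨ f i x = 1)
    (hcyl : ∀ i x x', (∀ j, j ≠ i → x j = x' j) → f i x = f i x') :
    (‖(Fintype.card (Fin k → Fin r → ZMod q) : ℂ)⁻¹ *
      ∑ x : Fin k → Fin r → ZMod q, (∏ i, (f i x : ℂ)) * χ (GIP x)‖) ^ (2^(k-1)) ≤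
      ((2*k : ℝ)/q) ^ r :=
  stmt_6_general q k r hk χ hχ f hval hcyl
end

section
/- Let R = X × Y ⊆ {0,1}^I × {0,1}^I be a combinatorial rectangle, i ∈ I, and suppose R ∩ D_i^I = ∅, where D_i^I := {(x,y) : x ∧ y = e_i}. Then for every (x', y') ∈ {0,1}^{I∖{i}} × {0,1}^{I∖{i}} with x' ∧ y' = 0, the number of extensions (x, y) ∈ R with x ∧ y = 0^I, x restricted to I∖{i} equals x', and y restricted to I∖{i} equals y', is at most 2. -/
/-! An extension in the fibre is determined by its pair of bits at `i`. If one extension had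
`x i = 1` and another `y i = 1`, the rectangle would contain the crossed pair, whose AND is `e_i`.
So one of the two bits vanishes throughout the fibre and the other one alone determines the
extension, leaving at most two possibilities. -/

open Finset

theorem Finset.card_le_two_of_injOn_of_forall_not_and {α : Type*} (S : Finset α)
    (f g : α → Bool) (hinj : Set.InjOn (fun p => (f p, g p)) S)
    (hmix : ∀ p ∈ S, ∀ q ∈ S, ¬(f p = true ∧ g q = true)) : #S ≤ 2 := by
  have card_le_of_injOn : ∀ h : α → Bool, Set.InjOn h S → #S ≤ 2 := fun h hh =>
    (card_le_card_of_injOn h (fun _ _ => mem_univ _) hh).trans_eq (by simp)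
  by_cases hf : ∃ p ∈ S, f p = true
  · obtain ⟨p, hp, hfp⟩ := hf
    have hg : ∀ q ∈ S, g q = false := fun q hq =>
      Bool.eq_false_iff.mpr fun hgq => hmix p hp q hq ⟨hfp, hgq⟩
    refine card_le_of_injOn f fun q hq r hr hqr => hinj hq hr ?_
    simp only [hqr, hg q hq, hg r hr]
  · simp only [not_exists, not_and, Bool.not_eq_true] at hf
    refine card_le_of_injOn g fun q hq r hr hqr => hinj hq hr ?_
    simp only [hqr, hf q hq, hf r hr]

section

variable {I : Type*} {i : I}

theorem Function.eq_of_forall_ne_eq_of_apply_eq {β : Type*} {x z : I → β}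
    (hoff : ∀ j : {j // j ≠ i}, x j = z j) (hi : x i = z i) : x = z := by
  funext j
  by_cases hj : j = i
  · exact hj ▸ hi
  · exact hoff ⟨j, hj⟩

theorem and_iff_eq_of_forall_ne_eq {x y : I → Bool} {x' y' : {j // j ≠ i} → Bool}
    (h' : ∀ j, ¬(x' j = true ∧ y' j = true))
    (hx : ∀ j : {j // j ≠ i}, x j = x' j) (hy : ∀ j : {j // j ≠ i}, y j = y' j)
    (hxi : x i = true) (hyi : y i = true) : ∀ j, (x j = true ∧ y j = true) ↔ j = i := by
  intro j
  refine ⟨fun hxy => ?_, fun hj => hj ▸ ⟨hxi, hyi⟩⟩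
  by_contra hj
  exact h' ⟨j, hj⟩ ⟨hx ⟨j, hj⟩ ▸ hxy.1, hy ⟨j, hj⟩ ▸ hxy.2⟩

end

theorem stmt_11 {I : Type*} [Fintype I] [DecidableEq I]
    (X Y : Finset (I → Bool)) (i : I)
    (hdisj : ∀ x ∈ X, ∀ y ∈ Y, ¬ (∀ j, (x j = true ∧ y j = true) ↔ j = i))
    (x' y' : {j : I // j ≠ i} → Bool) (h' : ∀ j, ¬(x' j = true ∧ y' j = true)) :
    ((X ×ˢ Y).filter (fun p =>
        (∀ j, ¬(p.1 j = true ∧ p.2 j = true)) ∧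
        (∀ j : {j : I // j ≠ i}, p.1 j.1 = x' j ∧ p.2 j.1 = y' j))).card ≤ 2 := by
  refine card_le_two_of_injOn_of_forall_not_and _ (fun p => p.1 i) (fun p => p.2 i) ?_ ?_
  · intro p hp q hq hpq
    simp only [mem_coe, mem_filter, mem_product, Prod.mk.injEq] at hp hq hpq
    exact Prod.ext
      (Function.eq_of_forall_ne_eq_of_apply_eq (fun j => (hp.2.2 j).1.trans (hq.2.2 j).1.symm) hpq.1)
      (Function.eq_of_forall_ne_eq_of_apply_eq (fun j => (hp.2.2 j).2.trans (hq.2.2 j).2.symm) hpq.2)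
  · intro p hp q hq ⟨hpi, hqi⟩
    simp only [mem_filter, mem_product] at hp hq
    exact hdisj p.1 hp.1.1 q.2 hq.1.2 <| and_iff_eq_of_forall_ne_eq h'
      (fun j => (hp.2.2 j).1) (fun j => (hq.2.2 j).2) hpi hqi
end

section
/- Projection Lemma: let R = X × Y ⊆ {0,1}^I × {0,1}^I be a rectangle and i ∈ I such that R ∩ D_i^I = ∅. Then there exists C ∈ {X, Y} such that |Π_{i,C}(R) ∩ D_0^{I∖{i}}| / 3^{|I|−1} ≥ (3/2) · |R ∩ D_0^I| / 3^{|I|}, i.e., the density E(R) := log(|R ∩ D_0|/3^{|I|}) increases by at least log(3/2) ≥ 1/2 under the projection. -/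
open Finset

/-- Restriction of a string on `I` to the coordinates `I \ {i}`. -/
def restrictAway {I : Type*} (i : I) (x : I → Bool) : {j : I // j ≠ i} → Bool :=
  fun j => x j.1

lemma restrictAway_ext {I : Type*} (i : I) {x₁ x₂ : I → Bool}
    (h : restrictAway i x₁ = restrictAway i x₂) (hi : x₁ i = x₂ i) : x₁ = x₂ := by
  funext j
  by_cases hj : j = i
  · subst hj; exact hi
  · exact congrFun h ⟨j, hj⟩

lemma update_eq_of_restrict {I : Type*} [DecidableEq I] {i : I} {y₁ y₂ : I → Bool}
    (h : restrictAway i y₁ = restrictAway i y₂) (h1 : y₁ i = true) :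
    y₁ = Function.update y₂ i true := by
  funext j
  by_cases hj : j = i
  · subst hj; simp [h1]
  · rw [Function.update_of_ne hj]; exact congrFun h ⟨j, hj⟩

lemma cross_contra {I : Type*} [Fintype I] [DecidableEq I]
    {X Y : Finset (I → Bool)} {i : I}
    (hdisj : ∀ x ∈ X, ∀ y ∈ Y, ¬ (∀ l, (x l = true ∧ y l = true) ↔ l = i))
    {x₁ x₂ y₂ : I → Bool} (hx₁ : x₁ ∈ X) (h1 : x₁ i = true)
    (hrx : restrictAway i x₁ = restrictAway i x₂)
    (hd₂ : ∀ l, ¬(x₂ l = true ∧ y₂ l = true))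
    (hupd : Function.update y₂ i true ∈ Y) : False := by
  apply hdisj x₁ hx₁ _ hupd
  intro l
  by_cases hl : l = i
  · subst hl; simp [h1]
  · have hx : x₁ l = x₂ l := congrFun hrx ⟨l, hl⟩
    rw [Function.update_of_ne hl]
    constructor
    · rintro ⟨ha, hb⟩
      exact absurd ⟨by rw [← hx]; exact ha, hb⟩ (hd₂ l)
    · intro h; exact absurd h hl

/-- The injection used in the projection lemma. -/
def projMap {I : Type*} [Fintype I] [DecidableEq I] (i : I) (Y : Finset (I → Bool))
    (p : (I → Bool) × (I → Bool)) :
    (({j : I // j ≠ i} → Bool) × ({j : I // j ≠ i} → Bool)) ⊕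
    (({j : I // j ≠ i} → Bool) × ({j : I // j ≠ i} → Bool)) :=
  if p.1 i = true then Sum.inr (restrictAway i p.1, restrictAway i p.2)
  else if p.2 i = true then Sum.inl (restrictAway i p.1, restrictAway i p.2)
  else if Function.update p.2 i true ∈ Y then Sum.inr (restrictAway i p.1, restrictAway i p.2)
  else Sum.inl (restrictAway i p.1, restrictAway i p.2)

theorem stmt_13 {I : Type*} [Fintype I] [DecidableEq I]
    (X Y : Finset (I → Bool)) (i : I)
    (hdisj : ∀ x ∈ X, ∀ y ∈ Y, ¬ (∀ l, (x l = true ∧ y l = true) ↔ l = i)) :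
    ∃ X' Y' : Finset ({j : I // j ≠ i} → Bool),
      ((X' = (X.filter (fun x => x i = false)).image (restrictAway i) ∧
          Y' = Y.image (restrictAway i)) ∨
       (X' = X.image (restrictAway i) ∧
          Y' = (Y.filter (fun y => y i = false)).image (restrictAway i))) ∧
      (3:ℝ)/2 * ((X ×ˢ Y).filter (fun p =>
          ∀ l, ¬(p.1 l = true ∧ p.2 l = true))).card / 3 ^ (Fintype.card I) ≤
      (((X' ×ˢ Y').filter (fun p =>
          ∀ l, ¬(p.1 l = true ∧ p.2 l = true))).card : ℝ) / 3 ^ (Fintype.card I - 1) := by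
  set S := (X ×ˢ Y).filter (fun p => ∀ l, ¬(p.1 l = true ∧ p.2 l = true)) with hS
  set PX := ((((X.filter (fun x => x i = false)).image (restrictAway i)) ×ˢ
      (Y.image (restrictAway i))).filter
      (fun p => ∀ l, ¬(p.1 l = true ∧ p.2 l = true))) with hPX
  set PY := (((X.image (restrictAway i)) ×ˢ
      ((Y.filter (fun y => y i = false)).image (restrictAway i))).filter
      (fun p => ∀ l, ¬(p.1 l = true ∧ p.2 l = true))) with hPY
  have hmaps : ∀ p ∈ S, projMap i Y p ∈ PX.disjSum PY := by
    rintro ⟨x, y⟩ hp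
    rw [hS, Finset.mem_filter, Finset.mem_product] at hp
    obtain ⟨⟨hx, hy⟩, hd⟩ := hp
    replace hd : ∀ l, ¬(x l = true ∧ y l = true) := hd
    replace hx : x ∈ X := hx
    replace hy : y ∈ Y := hy
    unfold projMap
    split_ifs with h1 h2 h3
    · rw [Finset.inr_mem_disjSum, hPY, Finset.mem_filter, Finset.mem_product]
      refine ⟨⟨Finset.mem_image_of_mem _ hx, ?_⟩, fun l => hd l.1⟩
      refine Finset.mem_image_of_mem _ ?_
      rw [Finset.mem_filter]
      exact ⟨hy, Bool.eq_false_iff.mpr (fun hyt => hd i ⟨h1, hyt⟩)⟩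
    · rw [Finset.inl_mem_disjSum, hPX, Finset.mem_filter, Finset.mem_product]
      refine ⟨⟨?_, Finset.mem_image_of_mem _ hy⟩, fun l => hd l.1⟩
      refine Finset.mem_image_of_mem _ ?_
      rw [Finset.mem_filter]
      exact ⟨hx, Bool.eq_false_iff.mpr h1⟩
    · rw [Finset.inr_mem_disjSum, hPY, Finset.mem_filter, Finset.mem_product]
      refine ⟨⟨Finset.mem_image_of_mem _ hx, ?_⟩, fun l => hd l.1⟩
      refine Finset.mem_image_of_mem _ ?_
      rw [Finset.mem_filter]
      exact ⟨hy, Bool.eq_false_iff.mpr h2⟩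
    · rw [Finset.inl_mem_disjSum, hPX, Finset.mem_filter, Finset.mem_product]
      refine ⟨⟨?_, Finset.mem_image_of_mem _ hy⟩, fun l => hd l.1⟩
      refine Finset.mem_image_of_mem _ ?_
      rw [Finset.mem_filter]
      exact ⟨hx, Bool.eq_false_iff.mpr h1⟩
  have hinj : Set.InjOn (projMap i Y) S := by
    rintro ⟨x₁, y₁⟩ hp ⟨x₂, y₂⟩ hq heq
    rw [Finset.mem_coe, hS, Finset.mem_filter, Finset.mem_product] at hp hq
    obtain ⟨⟨hx₁, hy₁⟩, hd₁⟩ := hp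
    obtain ⟨⟨hx₂, hy₂⟩, hd₂⟩ := hq
    replace hd₁ : ∀ l, ¬(x₁ l = true ∧ y₁ l = true) := hd₁
    replace hd₂ : ∀ l, ¬(x₂ l = true ∧ y₂ l = true) := hd₂
    replace hx₁ : x₁ ∈ X := hx₁
    replace hy₁ : y₁ ∈ Y := hy₁
    replace hx₂ : x₂ ∈ X := hx₂
    replace hy₂ : y₂ ∈ Y := hy₂
    unfold projMap at heq
    simp only at heq
    split_ifs at heq with h1 h2 h3 h4 h5 h6 h7 h8 h9 h10 h11 h12 h13 h14 h15
    -- (C, C)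
    · rw [Sum.inr.injEq, Prod.mk.injEq] at heq
      obtain ⟨hrx, hry⟩ := heq
      have f1 : y₁ i = false := Bool.eq_false_iff.mpr (fun hyt => hd₁ i ⟨h1, hyt⟩)
      have f2 : y₂ i = false := Bool.eq_false_iff.mpr (fun hyt => hd₂ i ⟨h2, hyt⟩)
      simp only [Prod.mk.injEq]
      exact ⟨restrictAway_ext i hrx (h1.trans h2.symm),
        restrictAway_ext i hry (f1.trans f2.symm)⟩
    -- (C, Aup)
    · rw [Sum.inr.injEq, Prod.mk.injEq] at heq
      exact (cross_contra hdisj hx₁ h1 heq.1 hd₂ h4).elim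
    -- (B, B)
    · rw [Sum.inl.injEq, Prod.mk.injEq] at heq
      obtain ⟨hrx, hry⟩ := heq
      have e1 : x₁ i = false := Bool.eq_false_iff.mpr h1
      have e2 : x₂ i = false := Bool.eq_false_iff.mpr h6
      simp only [Prod.mk.injEq]
      exact ⟨restrictAway_ext i hrx (e1.trans e2.symm),
        restrictAway_ext i hry (h5.trans h7.symm)⟩
    -- (B, Ano)
    · rw [Sum.inl.injEq, Prod.mk.injEq] at heq
      exact (h8 (update_eq_of_restrict heq.2 h5 ▸ hy₁)).elim
    -- (Aup, C)
    · rw [Sum.inr.injEq, Prod.mk.injEq] at heq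
      exact (cross_contra hdisj hx₂ h10 heq.1.symm hd₁ h9).elim
    -- (Aup, Aup)
    · rw [Sum.inr.injEq, Prod.mk.injEq] at heq
      obtain ⟨hrx, hry⟩ := heq
      have e1 : x₁ i = false := Bool.eq_false_iff.mpr h1
      have e2 : x₂ i = false := Bool.eq_false_iff.mpr h10
      have f1 : y₁ i = false := Bool.eq_false_iff.mpr h5
      have f2 : y₂ i = false := Bool.eq_false_iff.mpr h11
      simp only [Prod.mk.injEq]
      exact ⟨restrictAway_ext i hrx (e1.trans e2.symm),
        restrictAway_ext i hry (f1.trans f2.symm)⟩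
    -- (Ano, B)
    · rw [Sum.inl.injEq, Prod.mk.injEq] at heq
      exact (h9 (update_eq_of_restrict heq.2.symm h14 ▸ hy₂)).elim
    -- (Ano, Ano)
    · rw [Sum.inl.injEq, Prod.mk.injEq] at heq
      obtain ⟨hrx, hry⟩ := heq
      have e1 : x₁ i = false := Bool.eq_false_iff.mpr h1
      have e2 : x₂ i = false := Bool.eq_false_iff.mpr h13
      have f1 : y₁ i = false := Bool.eq_false_iff.mpr h5
      have f2 : y₂ i = false := Bool.eq_false_iff.mpr h14
      simp only [Prod.mk.injEq]
      exact ⟨restrictAway_ext i hrx (e1.trans e2.symm),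
        restrictAway_ext i hry (f1.trans f2.symm)⟩
  have key : S.card ≤ PX.card + PY.card := by
    rw [← Finset.card_disjSum]
    exact Finset.card_le_card_of_injOn (projMap i Y) hmaps hinj
  obtain ⟨m, hm⟩ : ∃ m, Fintype.card I = m + 1 :=
    ⟨Fintype.card I - 1, (Nat.succ_pred_eq_of_pos (Fintype.card_pos_iff.mpr ⟨i⟩)).symm⟩
  have hp3 : (0:ℝ) < 3 ^ m := by positivity
  by_cases hc : PY.card ≤ PX.card
  · refine ⟨_, _, Or.inl ⟨rfl, rfl⟩, ?_⟩
    rw [hm, Nat.add_sub_cancel]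
    rw [div_le_div_iff₀ (by positivity) hp3]
    have hkey : (S.card : ℝ) ≤ (PX.card : ℝ) + PY.card := by exact_mod_cast key
    have hc' : (PY.card : ℝ) ≤ PX.card := by exact_mod_cast hc
    have h3 : (3:ℝ) ^ (m + 1) = 3 * 3 ^ m := by ring
    rw [h3]
    nlinarith [mul_le_mul_of_nonneg_right (show (S.card:ℝ) ≤ 2 * PX.card by linarith) hp3.le]
  · refine ⟨_, _, Or.inr ⟨rfl, rfl⟩, ?_⟩
    rw [hm, Nat.add_sub_cancel]
    rw [div_le_div_iff₀ (by positivity) hp3]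
    have hkey : (S.card : ℝ) ≤ (PX.card : ℝ) + PY.card := by exact_mod_cast key
    have hc' : (PX.card : ℝ) ≤ PY.card := by exact_mod_cast le_of_not_ge hc
    have h3 : (3:ℝ) ^ (m + 1) = 3 * 3 ^ m := by ring
    rw [h3]
    nlinarith [mul_le_mul_of_nonneg_right (show (S.card:ℝ) ≤ 2 * PY.card by linarith) hp3.le]
end

section
/- Pseudorandomness of rectangles against disjointness: let R ⊆ {0,1}^n × {0,1}^n be a rectangle with |R ∩ D_0| ≥ |D_0| · 2^{−c} where D_0 = {(x,y) : x ∧ y = 0^n}. Then there exists S ⊆ [n] with |S| ≥ n − 2c such that for every i ∈ S, there exists (x,y) ∈ R with x ∧ y = e_i. -/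
/-!
Call a coordinate `i` bad if no pair of `X × Y` meets exactly in `i`. A disjoint pair has three
possible patterns at each coordinate, so a rectangle living on the coordinates `V` has at most
`3 ^ |V|` disjoint pairs. At a bad coordinate `i` the disjoint pairs split into two families which,
after clearing coordinate `i` of `y` (resp. `x`), inject into the disjoint pairs of two rectangles
no longer using `i`: a collision would produce a pair meeting exactly in `i`. Induction over the
bad set `B` gives at most `2 ^ |B| * 3 ^ (n - |B|)` disjoint pairs, and since `(2/3)^2 ≤ 1/2` the
density hypothesis forces `|B| ≤ 2c`.
-/

open Finset Function

variable {ι : Type*}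

def HasUnitIntersection (X Y : Finset (ι → Bool)) (i : ι) : Prop :=
  ∃ x ∈ X, ∃ y ∈ Y, ∀ l, (x l = true ∧ y l = true) ↔ l = i

def SupportedOn (X : Finset (ι → Bool)) (V : Finset ι) : Prop :=
  ∀ x ∈ X, ∀ l ∉ V, x l = false

variable {X Y : Finset (ι → Bool)}

lemma hasUnitIntersection_comm {i : ι} :
    HasUnitIntersection Y X i ↔ HasUnitIntersection X Y i := by
  unfold HasUnitIntersection
  constructor <;>
  · rintro ⟨a, ha, b, hb, h⟩
    exact ⟨b, hb, a, ha, fun l => and_comm.trans (h l)⟩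

section Update

variable [DecidableEq ι] {i : ι}

lemma eq_of_update_eq_of_apply_eq {β : Type*} {y y' : ι → β} {a : β}
    (h : update y i a = update y' i a) (hi : y i = y' i) : y = y' :=
  calc y = update (update y i a) i (y i) := by simp
    _ = update (update y' i a) i (y' i) := by rw [h, hi]
    _ = y' := by simp

lemma update_eq_update_of_update_eq {β : Type*} {y y' : ι → β} {a : β}
    (h : update y i a = update y' i a) (b : β) : update y i b = update y' i b := by
  simpa using congrArg (update · i b) h

lemma apply_eq_false_of_update_notMem {z : ι → Bool} (hz : z ∈ X)
    (h : update z i true ∉ X) : z i = false := by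
  by_contra hzi
  rw [Bool.not_eq_false] at hzi
  exact h (by rwa [update_eq_self_iff.mpr hzi.symm])

lemma hasUnitIntersection_of_update {x y : ι → Bool} (hx : update x i true ∈ X)
    (hy : update y i true ∈ Y) (hxy : ∀ l, ¬(x l = true ∧ y l = true)) :
    HasUnitIntersection X Y i := by
  refine ⟨_, hx, _, hy, fun l => ?_⟩
  by_cases hl : l = i
  · simp [hl]
  · simpa [hl] using hxy l

lemma SupportedOn.filter_apply_eq_false {V : Finset ι} (hX : SupportedOn X V) :
    SupportedOn (X.filter (· i = false)) (V.erase i) := by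
  intro x hx l hl
  rw [mem_filter] at hx
  by_cases hli : l = i
  · exact hli ▸ hx.2
  · exact hX x hx.1 l (by simpa [hli] using hl)

end Update

section Fintype

variable [Fintype ι]

def disjointPairs (X Y : Finset (ι → Bool)) : Finset ((ι → Bool) × (ι → Bool)) :=
  (X ×ˢ Y).filter (fun p => ∀ i, ¬(p.1 i = true ∧ p.2 i = true))

lemma mem_disjointPairs {p : (ι → Bool) × (ι → Bool)} :
    p ∈ disjointPairs X Y ↔ p.1 ∈ X ∧ p.2 ∈ Y ∧ ∀ l, ¬(p.1 l = true ∧ p.2 l = true) := by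
  simp [disjointPairs, and_assoc]

lemma card_disjointPairs_comm : #(disjointPairs Y X) = #(disjointPairs X Y) := by
  refine card_bij (fun p _ => p.swap) ?_ (fun p _ q _ h => Prod.swap_injective h) ?_
  · intro p hp
    simp only [mem_disjointPairs, Prod.fst_swap, Prod.snd_swap] at hp ⊢
    exact ⟨hp.2.1, hp.1, fun l h => hp.2.2 l h.symm⟩
  · intro q hq
    refine ⟨q.swap, ?_, q.swap_swap⟩
    simp only [mem_disjointPairs, Prod.fst_swap, Prod.snd_swap] at hq ⊢
    exact ⟨hq.2.1, hq.1, fun l h => hq.2.2 l h.symm⟩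

lemma card_disjointPairs_le_three_pow {V : Finset ι} (hX : SupportedOn X V)
    (hY : SupportedOn Y V) : #(disjointPairs X Y) ≤ 3 ^ #V := by
  classical
  let T : Finset (Bool × Bool) := univ.filter fun b => ¬(b.1 = true ∧ b.2 = true)
  calc #(disjointPairs X Y)
      ≤ #(Fintype.piFinset fun _ : V => T) := by
        refine card_le_card_of_injOn (fun p l => (p.1 l, p.2 l)) ?_ ?_
        · intro p hp
          rw [mem_coe, mem_disjointPairs] at hp
          simpa [T] using fun l _ => hp.2.2 l
        · intro p hp q hq hpq
          rw [mem_coe, mem_disjointPairs] at hp hq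
          have hV : ∀ l ∈ V, p.1 l = q.1 l ∧ p.2 l = q.2 l := fun l hl =>
            Prod.ext_iff.mp (congrFun hpq ⟨l, hl⟩)
          ext l
          all_goals by_cases hl : l ∈ V
          · exact (hV l hl).1
          · rw [hX _ hp.1 l hl, hX _ hq.1 l hl]
          · exact (hV l hl).2
          · rw [hY _ hp.2.1 l hl, hY _ hq.2.1 l hl]
    _ = 3 ^ #V := by simp [Fintype.card_piFinset, T]; rfl

variable [DecidableEq ι] {i : ι}

lemma SupportedOn.image_update_false {V : Finset ι} (hX : SupportedOn X V) :
    SupportedOn (X.image (fun x => update x i false)) (V.erase i) := by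
  rintro _ hx' l hl
  obtain ⟨x, hx, rfl⟩ := mem_image.mp hx'
  by_cases hli : l = i
  · simp [hli]
  · simpa [hli] using hX x hx l (by simpa [hli] using hl)

lemma HasUnitIntersection.of_filter_image {j : ι}
    (h : HasUnitIntersection (X.filter (· i = false)) (Y.image (fun y => update y i false)) j) :
    HasUnitIntersection X Y j := by
  obtain ⟨x, hx, _, hy', hxy⟩ := h
  obtain ⟨y, hy, rfl⟩ := mem_image.mp hy'
  rw [mem_filter] at hx
  refine ⟨x, hx.1, y, hy, fun l => (Iff.trans ?_ (hxy l))⟩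
  by_cases hli : l = i
  · simp [hli, hx.2]
  · simp [hli]

lemma card_filter_disjointPairs_le :
    #((disjointPairs X Y).filter fun p => p.1 i = false ∧ (update p.2 i true ∈ Y → p.2 i = true)) ≤
      #(disjointPairs (X.filter (· i = false)) (Y.image (fun y => update y i false))) := by
  refine card_le_card_of_injOn (fun p : (ι → Bool) × (ι → Bool) => (p.1, update p.2 i false))
    ?_ ?_
  · rintro ⟨x, y⟩ hp
    simp only [coe_filter, Set.mem_ofPred_eq, mem_disjointPairs] at hp
    obtain ⟨⟨hx, hy, hxy⟩, hxi, -⟩ := hp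
    refine mem_disjointPairs.mpr ⟨mem_filter.mpr ⟨hx, hxi⟩, mem_image_of_mem _ hy, fun l => ?_⟩
    by_cases hl : l = i <;> simp [hl, hxy l]
  · rintro ⟨x, y⟩ hp ⟨x', y'⟩ hq hpq
    simp only [coe_filter, Set.mem_ofPred_eq, mem_disjointPairs] at hp hq
    simp only [Prod.mk.injEq] at hpq ⊢
    refine ⟨hpq.1, eq_of_update_eq_of_apply_eq hpq.2 ?_⟩
    have hup := update_eq_update_of_update_eq hpq.2 true
    by_cases hY : update y i true ∈ Y
    · rw [hp.2.2 hY, hq.2.2 (hup ▸ hY)]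
    · rw [apply_eq_false_of_update_notMem hp.1.2.1 hY,
        apply_eq_false_of_update_notMem hq.1.2.1 (hup ▸ hY)]

lemma card_filter_not_disjointPairs_le (hi : ¬HasUnitIntersection X Y i) :
    #((disjointPairs X Y).filter fun p => ¬(p.1 i = false ∧ (update p.2 i true ∈ Y → p.2 i = true))) ≤
      #(disjointPairs (X.image (fun x => update x i false)) (Y.filter (· i = false))) := by
  refine card_le_card_of_injOn (fun p : (ι → Bool) × (ι → Bool) => (update p.1 i false, p.2))
    ?_ ?_
  · rintro ⟨x, y⟩ hp
    simp only [coe_filter, Set.mem_ofPred_eq, mem_disjointPairs] at hp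
    obtain ⟨⟨hx, hy, hxy⟩, hB⟩ := hp
    have hyi : y i = false := by
      cases hxi : x i
      · simp_all
      · simpa [hxi] using hxy i
    refine mem_disjointPairs.mpr ⟨mem_image_of_mem _ hx, mem_filter.mpr ⟨hy, hyi⟩, fun l => ?_⟩
    by_cases hl : l = i <;> simp [hl, hxy l]
  · rintro ⟨x, y⟩ hp ⟨x', y'⟩ hq hpq
    simp only [coe_filter, Set.mem_ofPred_eq, mem_disjointPairs] at hp hq
    simp only [Prod.mk.injEq] at hpq ⊢
    obtain ⟨hpq, rfl⟩ := hpq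
    refine ⟨eq_of_update_eq_of_apply_eq hpq ?_, rfl⟩
    have hup := update_eq_update_of_update_eq hpq true
    by_cases hY : update y i true ∈ Y
    · have hX : update x i true ∉ X := fun hX =>
        hi (hasUnitIntersection_of_update hX hY hp.1.2.2)
      rw [apply_eq_false_of_update_notMem hp.1.1 hX,
        apply_eq_false_of_update_notMem hq.1.1 (hup ▸ hX)]
    · simp only [hY, IsEmpty.forall_iff, and_true, Bool.not_eq_false] at hp hq
      rw [hp.2, hq.2]

lemma card_disjointPairs_le_add (hi : ¬HasUnitIntersection X Y i) :
    #(disjointPairs X Y) ≤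
      #(disjointPairs (X.filter (· i = false)) (Y.image (fun y => update y i false))) +
      #(disjointPairs (X.image (fun x => update x i false)) (Y.filter (· i = false))) := by
  -- Clearing `y i` collides only when `y` and `update y i true` both lie in `Y`; such pairs
  -- are sent to the other side, where clearing `x i` could only collide at a pair meeting
  -- exactly in `i`.
  rw [← card_filter_add_card_filter_not (s := disjointPairs X Y)
    (p := fun p : (ι → Bool) × (ι → Bool) =>
      p.1 i = false ∧ (update p.2 i true ∈ Y → p.2 i = true))]
  exact add_le_add card_filter_disjointPairs_le (card_filter_not_disjointPairs_le hi)

lemma card_disjointPairs_le_of_forall_not_hasUnitIntersection {B V : Finset ι} (hBV : B ⊆ V)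
    (hX : SupportedOn X V) (hY : SupportedOn Y V) (hB : ∀ j ∈ B, ¬HasUnitIntersection X Y j) :
    #(disjointPairs X Y) ≤ 2 ^ #B * 3 ^ (#V - #B) := by
  induction B using Finset.induction_on generalizing V X Y with
  | empty => simpa using card_disjointPairs_le_three_pow hX hY
  | @insert i B hiB ih =>
    have hiV : i ∈ V := hBV (mem_insert_self i B)
    have hBV' : B ⊆ V.erase i := fun j hj =>
      mem_erase.mpr ⟨fun h => hiB (h ▸ hj), hBV (mem_insert_of_mem hj)⟩
    have h₁ := ih hBV' hX.filter_apply_eq_false hY.image_update_false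
      fun j hj h => hB j (mem_insert_of_mem hj) h.of_filter_image
    have h₂ := ih hBV' hY.filter_apply_eq_false hX.image_update_false
      fun j hj h => hB j (mem_insert_of_mem hj) (hasUnitIntersection_comm.mp h.of_filter_image)
    rw [card_disjointPairs_comm] at h₂
    calc #(disjointPairs X Y)
        ≤ _ := card_disjointPairs_le_add (hB i (mem_insert_self i B))
      _ ≤ 2 ^ #B * 3 ^ (#(V.erase i) - #B) + 2 ^ #B * 3 ^ (#(V.erase i) - #B) :=
        add_le_add h₁ h₂
      _ = 2 ^ #(insert i B) * 3 ^ (#V - #(insert i B)) := by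
        rw [card_erase_of_mem hiV, card_insert_of_notMem hiB, Nat.sub_sub, add_comm 1]
        ring

end Fintype

lemma le_two_mul_of_three_pow_mul_le {n b : ℕ} {c : ℝ} (hb : b ≤ n)
    (h : (3 : ℝ) ^ n * 2 ^ (-c) ≤ 2 ^ b * 3 ^ (n - b)) : (b : ℝ) ≤ 2 * c := by
  have h₁ : (2 : ℝ) ^ (-c) ≤ (2 / 3) ^ b := by
    rw [← pow_mul_pow_sub 3 hb] at h
    have h' : (3 : ℝ) ^ (n - b) * (3 ^ b * 2 ^ (-c)) ≤ 3 ^ (n - b) * 2 ^ b := by linarith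
    rw [div_pow, le_div_iff₀ (by positivity)]
    linarith [le_of_mul_le_mul_left h' (by positivity)]
  have h₂ : (2 : ℝ) ^ (-(2 * c)) ≤ 2 ^ (-(b : ℝ)) :=
    calc (2 : ℝ) ^ (-(2 * c)) = (2 ^ (-c)) ^ 2 := by
          rw [← Real.rpow_natCast, ← Real.rpow_mul (by norm_num)]; ring_nf
      _ ≤ ((2 / 3) ^ b) ^ 2 := by gcongr
      _ = (4 / 9) ^ b := by rw [← pow_mul, mul_comm, pow_mul]; norm_num
      _ ≤ (1 / 2) ^ b := pow_le_pow_left₀ (by norm_num) (by norm_num) b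
      _ = 2 ^ (-(b : ℝ)) := by rw [Real.rpow_neg (by norm_num), Real.rpow_natCast]; simp
  linarith [(Real.rpow_le_rpow_left_iff (by norm_num : (1 : ℝ) < 2)).mp h₂]

theorem stmt_14 (n : ℕ) (c : ℝ) (X Y : Finset (Fin n → Bool))
    (h : (3:ℝ)^n * (2:ℝ)^(-c) ≤
      (((X ×ˢ Y).filter (fun p => ∀ i, ¬(p.1 i = true ∧ p.2 i = true))).card : ℝ)) :
    ∃ S : Finset (Fin n), (n:ℝ) - 2*c ≤ (S.card : ℝ) ∧
      ∀ i ∈ S, ∃ x ∈ X, ∃ y ∈ Y, ∀ l, (x l = true ∧ y l = true) ↔ l = i := by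
  classical
  refine ⟨univ.filter (HasUnitIntersection X Y), ?_, fun i hi => (mem_filter.mp hi).2⟩
  set B := univ.filter fun i => ¬HasUnitIntersection X Y i
  have hcount : #(disjointPairs X Y) ≤ 2 ^ #B * 3 ^ (n - #B) := by
    simpa using card_disjointPairs_le_of_forall_not_hasUnitIntersection (subset_univ B)
      (fun _ _ l hl => absurd (mem_univ l) hl) (fun _ _ l hl => absurd (mem_univ l) hl)
      fun j hj => (mem_filter.mp hj).2
  have hcount' : (#((X ×ˢ Y).filter fun p => ∀ i, ¬(p.1 i = true ∧ p.2 i = true)) : ℝ) ≤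
      2 ^ #B * 3 ^ (n - #B) := by
    -- the statement decides its filter with `Nat.decidableForallFin`, not the generic instance
    unfold disjointPairs at hcount
    exact_mod_cast (by convert hcount : #((X ×ˢ Y).filter _) ≤ _)
  have hB : (#B : ℝ) ≤ 2 * c :=
    le_two_mul_of_three_pow_mul_le (card_le_univ B |>.trans_eq (by simp)) (h.trans hcount')
  have hsplit : #(univ.filter (HasUnitIntersection X Y)) + #B = n := by
    simpa using card_filter_add_card_filter_not (s := univ) (HasUnitIntersection X Y)
  have : (#(univ.filter (HasUnitIntersection X Y)) : ℝ) + #B = n := by exact_mod_cast hsplit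
  linarith
end

section
/- The deterministic one-way three-party NOF communication complexity of three-party set disjointness DISJ_3(x,y,z) := ⋀_{i=1}^n (¬z_i ∨ ¬x_i ∨ ¬y_i) is Ω(n). Concretely: for every deterministic one-way NOF protocol with communication cost at most δn (for a sufficiently small constant δ > 0 and n sufficiently large), there exist x*, y*, z_0*, z_1* ∈ {0,1}^n such that the protocol's first two players produce identical messages on inputs (x*, y*, z_0*) and (x*, y*, z_1*), yet DISJ_3(x*, y*, z_0*) ≠ DISJ_3(x*, y*, z_1*). -/
/-!
Identify `{0,1}ⁿ` with the subsets of `[n]`, let `K = 2^(a+b)` be the number of transcripts and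
`w = 4(a+b) + 2`. For each disjoint pair `(x, y)`, Cauchy–Schwarz gives at least `4ⁿ / K` pairs
`(z₀, z₁)` with the same transcript, while at most `4ʷ 3ⁿ` pairs are within Hamming distance `2w`.
Summing over the `3ⁿ` disjoint pairs and pigeonholing on `(z₀, z₁, t)` yields a far pair
`(z₀, z₁)` and a transcript `t` shared by more than `2ʷ 3ⁿ⁻ʷ` disjoint pairs `(x, y)`. These pairs
form a rectangle `X × Y`, because A's messages depend on `y` and B's on `x` only. Pick `W` with
`|W| = w` on which `z₀ = 1` and `z₁ = 0` (or vice versa). If every `(x, y) ∈ X × Y` with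
`x ∩ y ⊆ W` were disjoint, then over each outside-`W` pattern the traces on `W` would form
cross-disjoint families, leaving at most `2ʷ 3ⁿ⁻ʷ` disjoint pairs in `X × Y`. So some pair of the
rectangle has `∅ ≠ x ∩ y ⊆ W`, and DISJ₃ tells `z₀` from `z₁` on it.
-/

open Finset
open scoped symmDiff

namespace OneWayNOF

section Counting

variable {ι : Type*} [DecidableEq ι]

theorem card_filter_product_eq_sum {α β : Type*} (s : Finset α) (t : Finset β)
    (P : α → β → Prop) [∀ a b, Decidable (P a b)] :
    #((s ×ˢ t).filter fun p => P p.1 p.2) = ∑ a ∈ s, #(t.filter (P a)) := by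
  simp only [card_filter, sum_product]

theorem sum_powerset_two_pow_card_sdiff (S : Finset ι) :
    ∑ s ∈ S.powerset, 2 ^ #(S \ s) = 3 ^ #S := by
  rw [sum_congr rfl fun s hs => by rw [card_sdiff_of_subset (mem_powerset.1 hs)],
    sum_powerset_apply_card (fun k => 2 ^ (#S - k)), show 3 = 1 + 2 by rfl, add_pow]
  simp [mul_comm]

theorem card_filter_disjoint_powerset_product (S : Finset ι) :
    #((S.powerset ×ˢ S.powerset).filter fun p => Disjoint p.1 p.2) = 3 ^ #S := by
  rw [card_filter_product_eq_sum, ← sum_powerset_two_pow_card_sdiff]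
  refine sum_congr rfl fun s _ => ?_
  rw [← card_powerset]
  congr 1
  ext t
  simp [subset_sdiff, disjoint_comm]

theorem card_filter_card_le_mul_two_pow_le [Fintype ι] (r : ℕ) :
    #(univ.filter fun d : Finset ι => #d ≤ r) * 2 ^ Fintype.card ι ≤
      2 ^ r * 3 ^ Fintype.card ι := by
  calc #(univ.filter fun d : Finset ι => #d ≤ r) * 2 ^ Fintype.card ι
      = ∑ d ∈ univ.filter (fun d : Finset ι => #d ≤ r), 2 ^ (#d + #dᶜ) := by
        rw [sum_congr rfl fun d _ => by rw [card_add_card_compl], sum_const, smul_eq_mul]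
    _ ≤ ∑ d ∈ univ.filter (fun d : Finset ι => #d ≤ r), 2 ^ r * 2 ^ #dᶜ := by
        refine sum_le_sum fun d hd => ?_
        rw [← pow_add]
        exact Nat.pow_le_pow_right two_pos (Nat.add_le_add_right (mem_filter.1 hd).2 _)
    _ ≤ ∑ d : Finset ι, 2 ^ r * 2 ^ #dᶜ :=
        sum_le_sum_of_subset_of_nonneg (filter_subset _ _) fun _ _ _ => Nat.zero_le _
    _ = 2 ^ r * 3 ^ Fintype.card ι := by
        simp_rw [← mul_sum, compl_eq_univ_sdiff]
        rw [← powerset_univ, sum_powerset_two_pow_card_sdiff, card_univ]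

theorem card_close_pairs_le [Fintype ι] (r : ℕ) :
    #(univ.filter fun p : Finset ι × Finset ι => #(p.1 ∆ p.2) ≤ r) ≤
      2 ^ r * 3 ^ Fintype.card ι := by
  have hsub : (univ.filter fun p : Finset ι × Finset ι => #(p.1 ∆ p.2) ≤ r) ⊆
      (univ ×ˢ univ.filter fun d : Finset ι => #d ≤ r).image fun q => (q.1, q.1 ∆ q.2) := by
    rintro ⟨z, z'⟩ h
    exact mem_image.2 ⟨(z, z ∆ z'), by simpa using h, by simp [symmDiff_symmDiff_cancel_left]⟩
  refine (card_le_card hsub).trans <| (card_image_le).trans ?_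
  rw [card_product, card_univ, Fintype.card_finset, mul_comm]
  exact card_filter_card_le_mul_two_pow_le r

theorem card_mul_card_le_two_pow_of_disjoint {A B : Finset (Finset ι)} {W : Finset ι}
    (hA : ∀ s ∈ A, s ⊆ W) (hB : ∀ t ∈ B, t ⊆ W) (hAB : ∀ s ∈ A, ∀ t ∈ B, Disjoint s t) :
    #A * #B ≤ 2 ^ #W := by
  set U := A.sup id
  set V := B.sup id
  have hUV : Disjoint U V :=
    Finset.disjoint_sup_left.2 fun s hs => Finset.disjoint_sup_right.2 fun t ht => hAB s hs t ht
  have hUVW : U ∪ V ⊆ W := union_subset (Finset.sup_le hA) (Finset.sup_le hB)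
  calc #A * #B ≤ #U.powerset * #V.powerset :=
        Nat.mul_le_mul (card_le_card fun s hs => mem_powerset.2 (le_sup (f := id) hs))
          (card_le_card fun t ht => mem_powerset.2 (le_sup (f := id) ht))
    _ = 2 ^ #(U ∪ V) := by rw [card_powerset, card_powerset, card_union_of_disjoint hUV, pow_add]
    _ ≤ 2 ^ #W := Nat.pow_le_pow_right two_pos (card_le_card hUVW)

theorem card_mul_card_filter_sdiff_le (X Y : Finset (Finset ι)) (W : Finset ι)
    (H : ∀ x ∈ X, ∀ y ∈ Y, x ∩ y ⊆ W → Disjoint x y) {u v : Finset ι} (huv : Disjoint u v) :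
    #(X.filter (· \ W = u)) * #(Y.filter (· \ W = v)) ≤ 2 ^ #W := by
  have inj (Z : Finset (Finset ι)) (u : Finset ι) : Set.InjOn (· ∩ W) (Z.filter (· \ W = u)) := by
    intro x hx x' hx' h
    rw [coe_filter] at hx hx'
    rw [← sdiff_union_inter x W, ← sdiff_union_inter x' W, hx.2, hx'.2]
    exact congrArg _ h
  rw [← card_image_of_injOn (inj X u), ← card_image_of_injOn (inj Y v)]
  refine card_mul_card_le_two_pow_of_disjoint ?_ ?_ ?_ <;> simp only [mem_image, mem_filter]
  · rintro _ ⟨x, -, rfl⟩; exact inter_subset_right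
  · rintro _ ⟨y, -, rfl⟩; exact inter_subset_right
  rintro _ ⟨x, ⟨hx, rfl⟩, rfl⟩ _ ⟨y, ⟨hy, rfl⟩, rfl⟩
  refine (H x hx y hy fun i hi => ?_).mono inter_subset_left inter_subset_left
  by_contra hiW
  exact disjoint_left.1 huv (mem_sdiff.2 ⟨(mem_inter.1 hi).1, hiW⟩)
    (mem_sdiff.2 ⟨(mem_inter.1 hi).2, hiW⟩)

theorem card_filter_disjoint_product_le [Fintype ι] (X Y : Finset (Finset ι)) (W : Finset ι)
    (H : ∀ x ∈ X, ∀ y ∈ Y, x ∩ y ⊆ W → Disjoint x y) :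
    #((X ×ˢ Y).filter fun p => Disjoint p.1 p.2) ≤ 2 ^ #W * 3 ^ (Fintype.card ι - #W) := by
  set P := (X ×ˢ Y).filter fun p => Disjoint p.1 p.2
  set f : Finset ι × Finset ι → Finset ι × Finset ι := fun p => (p.1 \ W, p.2 \ W)
  have himage : P.image f ⊆ (Wᶜ.powerset ×ˢ Wᶜ.powerset).filter fun p => Disjoint p.1 p.2 := by
    simp only [P, subset_iff, mem_image, mem_filter, mem_product, mem_powerset]
    rintro _ ⟨⟨x, y⟩, ⟨-, hxy⟩, rfl⟩
    simp only [f, sdiff_eq_inter_compl]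
    exact ⟨⟨inter_subset_right, inter_subset_right⟩, hxy.mono inter_subset_left inter_subset_left⟩
  have hfiber : ∀ q ∈ P.image f, #(P.filter (f · = q)) ≤ 2 ^ #W := by
    rintro ⟨u, v⟩ hq
    have huv : Disjoint u v := (mem_filter.1 (himage hq)).2
    calc #(P.filter (f · = (u, v)))
        ≤ #(X.filter (· \ W = u) ×ˢ Y.filter (· \ W = v)) := by
          refine card_le_card fun p hp => ?_
          simp only [P, f, mem_filter, mem_product, Prod.mk.injEq] at hp ⊢
          exact ⟨⟨hp.1.1.1, hp.2.1⟩, hp.1.1.2, hp.2.2⟩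
      _ ≤ 2 ^ #W := by
          rw [card_product]
          exact card_mul_card_filter_sdiff_le X Y W H huv
  calc #P ≤ 2 ^ #W * #(P.image f) := card_le_mul_card_image P _ hfiber
    _ ≤ 2 ^ #W * 3 ^ (Fintype.card ι - #W) := by
      rw [← card_compl, ← card_filter_disjoint_powerset_product]
      exact Nat.mul_le_mul_left _ (card_le_card himage)

theorem sq_card_le_card_mul_card_filter_eq {γ κ : Type*} [Fintype γ] [Fintype κ] [DecidableEq κ]
    (f : γ → κ) :
    Fintype.card γ ^ 2 ≤ Fintype.card κ * #(univ.filter fun p : γ × γ => f p.1 = f p.2) := by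
  set fib : κ → Finset γ := fun k => univ.filter (f · = k)
  have hpairs : #(univ.filter fun p : γ × γ => f p.1 = f p.2) = ∑ k, #(fib k) ^ 2 := by
    rw [card_eq_sum_card_fiberwise (f := fun p : γ × γ => f p.1) (t := univ) (by simp)]
    refine sum_congr rfl fun k _ => ?_
    rw [sq, ← card_product, filter_filter]
    congr 1
    ext ⟨z, z'⟩
    simp only [fib, mem_filter, mem_univ, true_and, mem_product]
    constructor
    · rintro ⟨h, rfl⟩; exact ⟨rfl, h.symm⟩
    · rintro ⟨rfl, h⟩; exact ⟨h.symm, rfl⟩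
  have hcard : Fintype.card γ = ∑ k, #(fib k) := by
    rw [← card_univ, card_eq_sum_card_fiberwise (f := f) (t := univ) (by simp)]
  rw [hpairs, hcard]
  exact sq_sum_le_card_mul_sum_sq

theorem four_pow_le_card_mul_card_far_pairs [Fintype ι] {κ : Type*} [Fintype κ] [DecidableEq κ]
    (f : Finset ι → κ) (r : ℕ)
    (h : 2 * Fintype.card κ * 2 ^ r * 3 ^ Fintype.card ι ≤ 4 ^ Fintype.card ι) :
    4 ^ Fintype.card ι ≤ 2 * Fintype.card κ *
      #(univ.filter fun p : Finset ι × Finset ι => f p.1 = f p.2 ∧ r < #(p.1 ∆ p.2)) := by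
  set M := univ.filter fun p : Finset ι × Finset ι => f p.1 = f p.2
  have hM : 4 ^ Fintype.card ι ≤ Fintype.card κ * #M :=
    calc 4 ^ Fintype.card ι = Fintype.card (Finset ι) ^ 2 := by
          rw [Fintype.card_finset, ← pow_mul, mul_comm, pow_mul]; norm_num
      _ ≤ Fintype.card κ * #M := sq_card_le_card_mul_card_filter_eq f
  have hsplit : #M ≤ #(univ.filter fun p : Finset ι × Finset ι =>
      f p.1 = f p.2 ∧ r < #(p.1 ∆ p.2)) + 2 ^ r * 3 ^ Fintype.card ι := by
    rw [← card_filter_add_card_filter_not (p := fun p : Finset ι × Finset ι => r < #(p.1 ∆ p.2)),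
      filter_filter]
    refine Nat.add_le_add_left ((card_le_card fun p hp => ?_).trans (card_close_pairs_le r)) _
    simp only [M, mem_filter, not_lt] at hp ⊢
    exact ⟨hp.1.1, hp.2⟩
  nlinarith [Nat.mul_le_mul_left (2 * Fintype.card κ) hsplit]

end Counting

section Protocol

variable {ι α β : Type*} (mA : Finset ι → Finset ι → α) (mB : Finset ι → Finset ι → α → β)

def transcript (x y z : Finset ι) : α × β := (mA y z, mB x z (mA y z))

theorem transcript_eq_and_transcript_eq_iff {x y z₀ z₁ : Finset ι} {t : α × β} :
    transcript mA mB x y z₀ = t ∧ transcript mA mB x y z₁ = t ↔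
      (mA y z₀ = t.1 ∧ mA y z₁ = t.1) ∧ (mB x z₀ t.1 = t.2 ∧ mB x z₁ t.1 = t.2) := by
  obtain ⟨a, b⟩ := t
  simp only [transcript, Prod.mk.injEq]
  constructor
  · rintro ⟨⟨rfl, h₀⟩, h₁, h₁'⟩
    exact ⟨⟨rfl, h₁⟩, h₀, h₁ ▸ h₁'⟩
  · rintro ⟨⟨rfl, h₁⟩, h₀, h₁'⟩
    exact ⟨⟨rfl, h₀⟩, h₁, h₁ ▸ h₁'⟩

variable [Fintype ι] [DecidableEq ι] [DecidableEq α] [DecidableEq β]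

theorem exists_transcript_eq_not_disjoint_of_card_lt {z₀ z₁ : Finset ι} {t : α × β}
    (W : Finset ι)
    (h : 2 ^ #W * 3 ^ (Fintype.card ι - #W) < #(univ.filter fun p : Finset ι × Finset ι =>
      Disjoint p.1 p.2 ∧ transcript mA mB p.1 p.2 z₀ = t ∧ transcript mA mB p.1 p.2 z₁ = t)) :
    ∃ x y, transcript mA mB x y z₀ = t ∧ transcript mA mB x y z₁ = t ∧
      x ∩ y ⊆ W ∧ ¬Disjoint x y := by
  set X := univ.filter fun x => mB x z₀ t.1 = t.2 ∧ mB x z₁ t.1 = t.2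
  set Y := univ.filter fun y => mA y z₀ = t.1 ∧ mA y z₁ = t.1
  by_contra! hcon
  refine h.not_ge <| (card_le_card fun p hp => ?_).trans <| card_filter_disjoint_product_le X Y W
    fun x hx y hy => ?_
  · simp only [mem_filter, mem_univ, true_and, transcript_eq_and_transcript_eq_iff] at hp
    simp only [X, Y, mem_filter, mem_product, mem_univ, true_and]
    exact ⟨⟨hp.2.2, hp.2.1⟩, hp.1⟩
  · obtain ⟨h₀, h₁⟩ := (transcript_eq_and_transcript_eq_iff mA mB).2
      ⟨(mem_filter.1 hy).2, (mem_filter.1 hx).2⟩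
    exact hcon x y h₀ h₁

variable [Fintype α] [Fintype β]

def farCollisions (r : ℕ) : Finset ((Finset ι × Finset ι) × (Finset ι × Finset ι)) :=
  ((univ.filter fun p : Finset ι × Finset ι => Disjoint p.1 p.2) ×ˢ univ).filter fun q =>
    transcript mA mB q.1.1 q.1.2 q.2.1 = transcript mA mB q.1.1 q.1.2 q.2.2 ∧
      r < #(q.2.1 ∆ q.2.2)

theorem three_pow_mul_four_pow_le_card_farCollisions (r : ℕ)
    (h : 2 * Fintype.card (α × β) * 2 ^ r * 3 ^ Fintype.card ι ≤ 4 ^ Fintype.card ι) :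
    3 ^ Fintype.card ι * 4 ^ Fintype.card ι ≤
      2 * Fintype.card (α × β) * #(farCollisions mA mB r) := by
  have hD₀ :
      #(univ.filter fun p : Finset ι × Finset ι => Disjoint p.1 p.2) = 3 ^ Fintype.card ι := by
    simpa [powerset_univ] using card_filter_disjoint_powerset_product (univ : Finset ι)
  rw [farCollisions, card_filter_product_eq_sum (P := fun p zz : Finset ι × Finset ι =>
      transcript mA mB p.1 p.2 zz.1 = transcript mA mB p.1 p.2 zz.2 ∧ r < #(zz.1 ∆ zz.2)),
    mul_sum, ← hD₀, card_eq_sum_ones, sum_mul]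
  exact sum_le_sum fun p _ => (one_mul _).trans_le (four_pow_le_card_mul_card_far_pairs _ r h)

theorem exists_far_pair_lt_card_filter_disjoint (w : ℕ)
    (h₁ : 2 * Fintype.card (α × β) ^ 2 * (2 ^ w * 3 ^ (Fintype.card ι - w)) < 3 ^ Fintype.card ι)
    (h₂ : 2 * Fintype.card (α × β) * 4 ^ w * 3 ^ Fintype.card ι ≤ 4 ^ Fintype.card ι) :
    ∃ z₀ z₁ : Finset ι, ∃ t : α × β, 2 * w < #(z₀ ∆ z₁) ∧
      2 ^ w * 3 ^ (Fintype.card ι - w) < #(univ.filter fun p : Finset ι × Finset ι =>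
        Disjoint p.1 p.2 ∧ transcript mA mB p.1 p.2 z₀ = t ∧ transcript mA mB p.1 p.2 z₁ = t) := by
  set n := Fintype.card ι
  set K := Fintype.card (α × β)
  set T := farCollisions mA mB (2 * w)
  have hT : 3 ^ n * 4 ^ n ≤ 2 * K * #T :=
    three_pow_mul_four_pow_le_card_farCollisions mA mB _ (by rwa [pow_mul])
  have hlt : #(univ : Finset ((Finset ι × Finset ι) × (α × β))) * (2 ^ w * 3 ^ (n - w)) < #T := by
    refine Nat.lt_of_mul_lt_mul_left (a := 2 * K) ?_
    have h4 : 2 ^ n * 2 ^ n = 4 ^ n := by rw [← mul_pow]; norm_num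
    calc 2 * K * (#(univ : Finset ((Finset ι × Finset ι) × (α × β))) * (2 ^ w * 3 ^ (n - w)))
        = 4 ^ n * (2 * K ^ 2 * (2 ^ w * 3 ^ (n - w))) := by
          rw [card_univ, Fintype.card_prod, Fintype.card_prod, Fintype.card_finset, h4]; ring
      _ < 4 ^ n * 3 ^ n := Nat.mul_lt_mul_of_pos_left h₁ (by positivity)
      _ ≤ 2 * K * #T := by rw [mul_comm]; exact hT
  obtain ⟨⟨⟨z₀, z₁⟩, t⟩, -, hfiber⟩ := exists_lt_card_fiber_of_mul_lt_card_of_maps_to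
    (f := fun q => (q.2, transcript mA mB q.1.1 q.1.2 q.2.1)) (fun _ _ => mem_univ _) hlt
  have mem_fiber {q} (hq : q ∈ T.filter fun q => (q.2, transcript mA mB q.1.1 q.1.2 q.2.1) =
      ((z₀, z₁), t)) : q.2 = (z₀, z₁) ∧ Disjoint q.1.1 q.1.2 ∧ transcript mA mB q.1.1 q.1.2 z₀ = t ∧
        transcript mA mB q.1.1 q.1.2 z₁ = t ∧ 2 * w < #(z₀ ∆ z₁) := by
    obtain ⟨p, z, z'⟩ := q
    simp only [T, farCollisions, mem_filter, mem_product, mem_univ, and_true, true_and,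
      Prod.mk.injEq] at hq
    obtain ⟨⟨hdisj, htr, hfar⟩, ⟨rfl, rfl⟩, ht⟩ := hq
    exact ⟨rfl, hdisj, ht, htr ▸ ht, hfar⟩
  obtain ⟨q, hq⟩ := card_pos.1 (hfiber.trans_le' (Nat.zero_le _))
  refine ⟨z₀, z₁, t, (mem_fiber hq).2.2.2.2, hfiber.trans_le (card_le_card_of_injOn Prod.fst ?_ ?_)⟩
  · intro q hq
    obtain ⟨-, h, h₀, h₁, -⟩ := mem_fiber hq
    simpa using ⟨h, h₀, h₁⟩
  · intro q hq q' hq' h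
    exact Prod.ext h ((mem_fiber hq).1.trans (mem_fiber hq').1.symm)

theorem exists_fooling_inputs (w : ℕ)
    (h₁ : 2 * Fintype.card (α × β) ^ 2 * (2 ^ w * 3 ^ (Fintype.card ι - w)) < 3 ^ Fintype.card ι)
    (h₂ : 2 * Fintype.card (α × β) * 4 ^ w * 3 ^ Fintype.card ι ≤ 4 ^ Fintype.card ι) :
    ∃ x y z₀ z₁ : Finset ι, transcript mA mB x y z₀ = transcript mA mB x y z₁ ∧
      ¬(Disjoint (x ∩ y) z₀ ↔ Disjoint (x ∩ y) z₁) := by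
  obtain ⟨z₀, z₁, t, hfar, hmany⟩ := exists_far_pair_lt_card_filter_disjoint mA mB w h₁ h₂
  have hcard : #(z₀ ∆ z₁) = #(z₀ \ z₁) + #(z₁ \ z₀) := card_union_of_disjoint disjoint_sdiff_sdiff
  wlog hw : w ≤ #(z₀ \ z₁) generalizing z₀ z₁
  · exact this z₁ z₀ (by rwa [symmDiff_comm]) (by simpa only [and_comm] using hmany)
      (by rwa [symmDiff_comm, add_comm]) (by omega)
  obtain ⟨W, hW, rfl⟩ := exists_subset_card_eq hw
  obtain ⟨x, y, hx₀, hx₁, hxyW, hxy⟩ := exists_transcript_eq_not_disjoint_of_card_lt mA mB W hmany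
  have hsub₀ : x ∩ y ⊆ z₀ := fun i hi => (mem_sdiff.1 (hW (hxyW hi))).1
  have hdisj₁ : Disjoint (x ∩ y) z₁ := disjoint_left.2 fun i hi => (mem_sdiff.1 (hW (hxyW hi))).2
  refine ⟨x, y, z₀, z₁, hx₀.trans hx₁.symm, fun h => hxy ?_⟩
  exact disjoint_iff_inter_eq_empty.2 (disjoint_self.1 ((h.2 hdisj₁).mono_right hsub₀))

end Protocol

theorem three_pow_mul_four_pow_le {k n : ℕ} (h : 5 * k ≤ n) : 3 ^ n * 4 ^ k ≤ 4 ^ n := by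
  obtain ⟨m, rfl⟩ := Nat.exists_eq_add_of_le h
  calc 3 ^ (5 * k + m) * 4 ^ k = (3 ^ 5 * 4) ^ k * 3 ^ m := by rw [mul_pow, ← pow_mul]; ring
    _ ≤ (4 ^ 5) ^ k * 4 ^ m :=
      Nat.mul_le_mul (Nat.pow_le_pow_left (by norm_num) k) (Nat.pow_le_pow_left (by norm_num) m)
    _ = 4 ^ (5 * k + m) := by rw [← pow_mul, ← pow_add]

theorem two_mul_two_pow_sq_mul_lt_three_pow {c n : ℕ} (h : 4 * c + 2 ≤ n) :
    2 * (2 ^ c) ^ 2 * (2 ^ (4 * c + 2) * 3 ^ (n - (4 * c + 2))) < 3 ^ n :=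
  calc 2 * (2 ^ c) ^ 2 * (2 ^ (4 * c + 2) * 3 ^ (n - (4 * c + 2)))
      = (2 ^ 3) ^ (2 * c + 1) * 3 ^ (n - (4 * c + 2)) := by
        rw [← pow_mul 2 3]; ring
    _ < (3 ^ 2) ^ (2 * c + 1) * 3 ^ (n - (4 * c + 2)) :=
        Nat.mul_lt_mul_of_pos_right (Nat.pow_lt_pow_left (by norm_num) (by omega)) (by positivity)
    _ = 3 ^ n := by rw [← pow_mul, ← pow_add]; congr 1; omega

theorem two_mul_two_pow_mul_four_pow_mul_three_pow_le {c n : ℕ} (hc : 50 * c ≤ n) (hn : 30 ≤ n) :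
    2 * 2 ^ c * 4 ^ (4 * c + 2) * 3 ^ n ≤ 4 ^ n :=
  calc 2 * 2 ^ c * 4 ^ (4 * c + 2) * 3 ^ n = 2 ^ (9 * c + 5) * 3 ^ n := by
        rw [show (4 : ℕ) = 2 ^ 2 by rfl, ← pow_mul]; ring
    _ ≤ 2 ^ (2 * (5 * c + 3)) * 3 ^ n :=
        Nat.mul_le_mul_right _ (Nat.pow_le_pow_right two_pos (by omega))
    _ = 3 ^ n * 4 ^ (5 * c + 3) := by rw [pow_mul]; ring
    _ ≤ 4 ^ n := three_pow_mul_four_pow_le (by omega)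

end OneWayNOF

open OneWayNOF in
theorem stmt_18 : ∃ δ : ℝ, 0 < δ ∧ ∃ N : ℕ, ∀ n : ℕ, N ≤ n →
    ∀ (a b : ℕ)
      (mA : (Fin n → Bool) → (Fin n → Bool) → Fin (2^a))
      (mB : (Fin n → Bool) → (Fin n → Bool) → Fin (2^a) → Fin (2^b)),
      ((a : ℝ) + b) ≤ δ * n →
      ∃ x y z₀ z₁ : Fin n → Bool,
        mA y z₀ = mA y z₁ ∧
        mB x z₀ (mA y z₀) = mB x z₁ (mA y z₁) ∧
        ¬ ((∀ i, ¬(x i = true ∧ y i = true ∧ z₀ i = true)) ↔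
           (∀ i, ¬(x i = true ∧ y i = true ∧ z₁ i = true))) := by
  refine ⟨1 / 50, by norm_num, 30, fun n hn a b mA mB hab => ?_⟩
  have hc : 50 * (a + b) ≤ n := by
    have : ((50 * (a + b) : ℕ) : ℝ) ≤ n := by push_cast; linarith
    exact_mod_cast this
  let e : Finset (Fin n) → Fin n → Bool := fun s i => decide (i ∈ s)
  have hK : Fintype.card (Fin (2 ^ a) × Fin (2 ^ b)) = 2 ^ (a + b) := by
    rw [Fintype.card_prod, Fintype.card_fin, Fintype.card_fin, pow_add]
  obtain ⟨x, y, z₀, z₁, htr, hne⟩ :=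
    exists_fooling_inputs (fun y z => mA (e y) (e z)) (fun x z => mB (e x) (e z)) (4 * (a + b) + 2)
      (by simpa only [hK, Fintype.card_fin] using two_mul_two_pow_sq_mul_lt_three_pow (by omega))
      (by simpa only [hK, Fintype.card_fin] using
        two_mul_two_pow_mul_four_pow_mul_three_pow_le hc hn)
  refine ⟨e x, e y, e z₀, e z₁, congrArg Prod.fst htr, congrArg Prod.snd htr, ?_⟩
  simpa [e, disjoint_left, and_assoc] using hne
end
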